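/- arXiv:2301.11952 — 3 statements merged into one kernel-verified Lean document; each statement's English description precedes it below -/
import Mathlib

section
/- Let T > 0, let u: [0,T] → ℝ be continuous, let (Ω, 𝔉, ℙ) be a probability space and Θ_t(ω) = (θ_t(ω), η(ω)) with Θ_0 measurable, t ↦ θ_t(ω) differentiable and ∂_t θ_t(ω) = (1 − cos θ_t(ω)) + (1 + cos θ_t(ω))·(u(t) + η(ω)) for all t, ω, and set μ_t = (Θ_t)_♯ℙ. Let p: [0,T] × ℝ² → ℝ be continuously differentiable and bounded, and suppose p solves the non-conservative transport equation ∂_t p(t,θ,η) + ∂_θ p(t,θ,η)·v_{u(t)}(θ,η) = 0 for all (t,θ,η). Then the map t ↦ ∫ p(t,θ,η) dμ_t(θ,η) is constant on [0,T]. -/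
open MeasureTheory Real

/-- The Theta model vector field. -/
noncomputable def thetaField (u θ η : ℝ) : ℝ :=
  (1 - Real.cos θ) + (1 + Real.cos θ) * (u + η)

lemma thetaField_eq (u x e : ℝ) :
    thetaField u x e = (1 + u + e) + (u + e - 1) * Real.cos x := by
  unfold thetaField; ring

lemma lipschitz_cos : LipschitzWith 1 Real.cos := by
  apply lipschitzWith_of_nnnorm_deriv_le Real.differentiable_cos
  intro x
  rw [Real.deriv_cos, ← NNReal.coe_le_coe]
  simp [Real.norm_eq_abs, abs_le, Real.neg_one_le_sin, Real.sin_le_one]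

lemma lipschitz_affine_cos (c k : ℝ) (K : NNReal) (hk : |k| ≤ K) :
    LipschitzWith K (fun x => c + k * Real.cos x) := by
  refine LipschitzWith.of_dist_le_mul fun x y => ?_
  have hc : |Real.cos x - Real.cos y| ≤ |x - y| := by
    simpa [Real.dist_eq] using lipschitz_cos.dist_le_mul x y
  have h2 : dist (c + k * Real.cos x) (c + k * Real.cos y)
      = |k| * |Real.cos x - Real.cos y| := by
    rw [Real.dist_eq, ← abs_mul]; ring_nf
  rw [h2, Real.dist_eq]
  exact mul_le_mul hk hc (abs_nonneg _) K.coe_nonneg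

lemma gronwall_aux {δ ε K t T : ℝ} (hδ : 0 ≤ δ) (hε : 0 ≤ ε) (hK : 1 ≤ K)
    (ht : 0 ≤ t) (htT : t ≤ T) : gronwallBound δ K ε t ≤ (δ + ε) * Real.exp (K * T) := by
  rw [gronwallBound_of_K_ne_0 (by linarith)]
  have h1 : Real.exp (K * t) ≤ Real.exp (K * T) := Real.exp_le_exp.mpr (by nlinarith)
  have h3 : (0:ℝ) < Real.exp (K * T) := Real.exp_pos _
  have h4 : ε / K ≤ ε := div_le_self hε hK
  have h5 : 0 ≤ ε / K := div_nonneg hε (by linarith)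
  have e1 := mul_le_mul_of_nonneg_left h1 hδ
  have e2 := mul_le_mul_of_nonneg_left (show Real.exp (K * t) - 1 ≤ Real.exp (K * T) by linarith) h5
  have e3 := mul_le_mul_of_nonneg_right h4 h3.le
  nlinarith

theorem transport_duality_conserved_quantity
    {T : ℝ} (hT : 0 < T) (u : ℝ → ℝ) (hu : ContinuousOn u (Set.Icc 0 T))
    {Ω : Type*} [MeasurableSpace Ω] (ℙ : Measure Ω) [IsProbabilityMeasure ℙ]
    (θ : ℝ → Ω → ℝ) (η : Ω → ℝ)
    (hmeas : Measurable (fun ω => (θ 0 ω, η ω)))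
    (hode : ∀ ω : Ω, ∀ t ∈ Set.Icc (0 : ℝ) T,
      HasDerivAt (fun s => θ s ω) (thetaField (u t) (θ t ω) (η ω)) t)
    (μ : ℝ → Measure (ℝ × ℝ))
    (hμ : ∀ t, μ t = Measure.map (fun ω => (θ t ω, η ω)) ℙ)
    (p : ℝ → ℝ → ℝ → ℝ)
    (hp : ContDiff ℝ 1 (fun q : ℝ × ℝ × ℝ => p q.1 q.2.1 q.2.2))
    (hbd : ∃ C : ℝ, ∀ t a b : ℝ, |p t a b| ≤ C)
    (htrans : ∀ t ∈ Set.Icc (0 : ℝ) T, ∀ a b : ℝ,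
      deriv (fun s => p s a b) t
        + deriv (fun a' => p t a' b) a * thetaField (u t) a b = 0) :
    ∀ t₁ ∈ Set.Icc (0 : ℝ) T, ∀ t₂ ∈ Set.Icc (0 : ℝ) T,
      ∫ x : ℝ × ℝ, p t₁ x.1 x.2 ∂(μ t₁) = ∫ x : ℝ × ℝ, p t₂ x.1 x.2 ∂(μ t₂) := by
  classical
  -- bound for u on [0, T]
  obtain ⟨M₀, hM₀⟩ := isCompact_Icc.exists_bound_of_continuousOn hu
  set M : ℝ := max M₀ 0 with hMdef
  have hM0 : (0:ℝ) ≤ M := le_max_right _ _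
  have hM : ∀ t ∈ Set.Icc (0:ℝ) T, |u t| ≤ M := fun t ht =>
    le_trans (by simpa using hM₀ t ht) (le_max_left _ _)
  -- clamped control, defined on all of ℝ
  set uc : ℝ → ℝ := fun t => u (min (max t 0) T) with hucdef
  have hclamp : ∀ t : ℝ, min (max t 0) T ∈ Set.Icc (0:ℝ) T := fun t =>
    ⟨le_min (le_max_right _ _) hT.le, min_le_right _ _⟩
  have hucont : Continuous uc :=
    hu.comp_continuous ((continuous_id.max continuous_const).min continuous_const) hclamp
  have hucM : ∀ t, |uc t| ≤ M := fun t => hM _ (hclamp t)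
  have huceq : ∀ t ∈ Set.Icc (0:ℝ) T, uc t = u t := by
    intro t ht
    show u _ = u t
    rw [max_eq_left ht.1, min_eq_left ht.2]
  -- Lipschitz constants
  set Ke : ℝ → NNReal := fun e => Real.toNNReal (M + |e| + 1) with hKedef
  have hKe : ∀ e, (Ke e : ℝ) = M + |e| + 1 := fun e => Real.coe_toNNReal _ (by positivity)
  have hKe1 : ∀ e, (1:ℝ) ≤ (Ke e : ℝ) := fun e => by
    rw [hKe e]; have := abs_nonneg e; linarith
  have hv : ∀ (e t : ℝ), LipschitzWith (Ke e) (fun x => thetaField (uc t) x e) := by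
    intro e t
    have hfe : (fun x => thetaField (uc t) x e)
        = fun x => (1 + uc t + e) + (uc t + e - 1) * Real.cos x :=
      funext fun x => thetaField_eq (uc t) x e
    rw [hfe]
    apply lipschitz_affine_cos
    rw [hKe e]
    have h1 : |uc t + e - 1| ≤ |uc t| + |e| + 1 := by
      have := abs_add_le (uc t + e) (-1)
      have h2 := abs_add_le (uc t) e
      simp only [abs_neg, abs_one] at this
      calc |uc t + e - 1| = |uc t + e + (-1)| := by ring_nf
        _ ≤ |uc t + e| + 1 := this
        _ ≤ |uc t| + |e| + 1 := by linarith
    linarith [hucM t]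
  -- a uniform bound for the vector field
  have hvbd : ∀ (e t x : ℝ), |thetaField (uc t) x e| ≤ 2 + 2 * M + 2 * |e| := by
    intro e t x
    rw [thetaField_eq]
    have hc1 : |Real.cos x| ≤ 1 := Real.abs_cos_le_one x
    have h1 : |(1 + uc t + e) + (uc t + e - 1) * Real.cos x|
        ≤ |1 + uc t + e| + |uc t + e - 1| * |Real.cos x| := by
      calc _ ≤ |1 + uc t + e| + |(uc t + e - 1) * Real.cos x| := abs_add_le _ _
        _ = _ := by rw [abs_mul]
    have h2 : |1 + uc t + e| ≤ 1 + M + |e| := by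
      have := abs_add_le (1 + uc t) e
      have := abs_add_le (1:ℝ) (uc t)
      have := hucM t
      have := abs_nonneg e
      simp only [abs_one] at *
      linarith [abs_add_le (1 + uc t) e, abs_add_le (1:ℝ) (uc t)]
    have h3 : |uc t + e - 1| ≤ M + |e| + 1 := by
      have := abs_add_le (uc t + e) (-1)
      simp only [abs_neg, abs_one] at this
      calc |uc t + e - 1| = |uc t + e + (-1)| := by ring_nf
        _ ≤ |uc t + e| + 1 := this
        _ ≤ M + |e| + 1 := by linarith [abs_add_le (uc t) e, hucM t]
    have h4 : |uc t + e - 1| * |Real.cos x| ≤ M + |e| + 1 := by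
      calc |uc t + e - 1| * |Real.cos x| ≤ |uc t + e - 1| * 1 :=
            mul_le_mul_of_nonneg_left hc1 (abs_nonneg _)
        _ = |uc t + e - 1| := mul_one _
        _ ≤ M + |e| + 1 := h3
    linarith
  -- global solutions from Picard–Lindelöf
  have hex : ∀ x e : ℝ, ∃ f : ℝ → ℝ, f 0 = x ∧ ∀ t ∈ Set.Icc (0:ℝ) T,
      HasDerivWithinAt f (thetaField (uc t) (f t) e) (Set.Icc 0 T) t := by
    intro x e
    have hpl : IsPicardLindelof (fun t y => thetaField (uc t) y e) (tmin := 0) (tmax := T)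
        ⟨0, ⟨le_refl 0, hT.le⟩⟩ x
        (((2 + 2 * M + 2 * |e|) * T).toNNReal) 0 (2 + 2 * M + 2 * |e|).toNNReal (Ke e) := by
      constructor
      · exact fun t _ => (hv e t).lipschitzOnWith
      · intro y _
        show ContinuousOn (fun t => (1 - Real.cos y) + (1 + Real.cos y) * (uc t + e)) _
        exact (continuous_const.add
          (continuous_const.mul (hucont.add continuous_const))).continuousOn
      · intro t _ y _
        rw [Real.coe_toNNReal _ (by positivity)]
        simpa [Real.norm_eq_abs] using hvbd e t y
      · have : max (T - 0) (0 - 0) = T := by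
          rw [sub_zero, sub_zero, max_eq_left hT.le]
        simp only [NNReal.coe_zero, sub_zero, zero_sub] at this ⊢
        rw [Real.coe_toNNReal _ (by positivity), Real.coe_toNNReal _ (by positivity)]
        simp [max_eq_left hT.le]
    exact hpl.exists_eq_forall_mem_Icc_hasDerivWithinAt₀
  choose F hF0 hFd using hex
  -- solutions satisfy the one-sided derivative condition
  have hFd' : ∀ x e : ℝ, ∀ t ∈ Set.Ico (0:ℝ) T,
      HasDerivWithinAt (F x e) (thetaField (uc t) (F x e t) e) (Set.Ici t) t := by
    intro x e t ht
    exact (hFd x e t (Set.mem_Icc_of_Ico ht)).mono_of_mem_nhdsWithin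
      (Icc_mem_nhdsGE_of_mem ht)
  have hFcont : ∀ x e : ℝ, ContinuousOn (F x e) (Set.Icc 0 T) :=
    fun x e t ht => (hFd x e t ht).continuousWithinAt
  -- uniqueness: θ coincides with the chosen solutions
  have hθsol : ∀ ω, ∀ t ∈ Set.Icc (0:ℝ) T, θ t ω = F (θ 0 ω) (η ω) t := by
    intro ω
    have huni := ODE_solution_unique (v := fun t y => thetaField (uc t) y (η ω))
      (K := Ke (η ω)) (f := fun s => θ s ω) (g := F (θ 0 ω) (η ω)) (a := 0) (b := T)
      (fun t => hv (η ω) t)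
      (fun t ht => (hode ω t ht).continuousAt.continuousWithinAt)
      (by
        intro t ht
        have h := (hode ω t (Set.mem_Icc_of_Ico ht)).hasDerivWithinAt (s := Set.Ici t)
        rwa [← huceq t (Set.mem_Icc_of_Ico ht)] at h)
      (hFcont _ _) (hFd' _ _) (by rw [hF0])
    exact fun t ht => huni ht
  -- continuity of the flow map via Grönwall
  have hest : ∀ (x₀ e₀ : ℝ), ∀ t ∈ Set.Icc (0:ℝ) T, ∀ x e : ℝ,
      dist (F x e t) (F x₀ e₀ t)
        ≤ (dist x x₀ + 2 * dist e e₀) * Real.exp ((Ke e₀ : ℝ) * T) := by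
    intro x₀ e₀ t ht x e
    have key := dist_le_of_approx_trajectories_ODE
      (v := fun t y => thetaField (uc t) y e₀) (K := Ke e₀)
      (f := F x e) (g := F x₀ e₀)
      (f' := fun s => thetaField (uc s) (F x e s) e)
      (g' := fun s => thetaField (uc s) (F x₀ e₀ s) e₀)
      (a := 0) (b := T) (εf := 2 * dist e e₀) (εg := 0) (δ := dist x x₀)
      (fun s => hv e₀ s) (hFcont x e) (hFd' x e)
      (by
        intro s _
        rw [Real.dist_eq]
        have hdiff : thetaField (uc s) (F x e s) e - thetaField (uc s) (F x e s) e₀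
            = (1 + Real.cos (F x e s)) * (e - e₀) := by
          unfold thetaField; ring
        rw [hdiff, abs_mul]
        have h1 : |1 + Real.cos (F x e s)| ≤ 2 := by
          have := Real.abs_cos_le_one (F x e s)
          rw [abs_le] at *
          constructor <;> [linarith [this.1]; linarith [this.2]]
        rw [Real.dist_eq]
        calc |1 + Real.cos (F x e s)| * |e - e₀| ≤ 2 * |e - e₀| :=
              mul_le_mul_of_nonneg_right h1 (abs_nonneg _)
          _ = 2 * |e - e₀| := rfl)
      (hFcont x₀ e₀) (hFd' x₀ e₀)
      (fun s _ => by simp)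
      (by rw [hF0, hF0])
      t ht
    have h2 : gronwallBound (dist x x₀) (Ke e₀) (2 * dist e e₀ + 0) (t - 0)
        ≤ (dist x x₀ + 2 * dist e e₀) * Real.exp ((Ke e₀ : ℝ) * T) := by
      rw [add_zero, sub_zero]
      exact gronwall_aux dist_nonneg (by positivity) (hKe1 e₀) ht.1 ht.2
    exact key.trans h2
  -- measurability of the pushforward maps
  have hmeasθ : ∀ t ∈ Set.Icc (0:ℝ) T, Measurable (fun ω => (θ t ω, η ω)) := by
    intro t ht
    have hFc : Continuous (fun q : ℝ × ℝ => F q.1 q.2 t) := by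
      rw [continuous_iff_continuousAt]
      intro q₀
      apply tendsto_iff_dist_tendsto_zero.mpr
      show Filter.Tendsto (fun q : ℝ × ℝ => dist (F q.1 q.2 t) (F q₀.1 q₀.2 t)) (nhds q₀) (nhds 0)
      apply squeeze_zero (fun q : ℝ × ℝ => dist_nonneg)
        (fun q : ℝ × ℝ => hest q₀.1 q₀.2 t ht q.1 q.2)
      have hcont : Continuous (fun q : ℝ × ℝ =>
          (dist q.1 q₀.1 + 2 * dist q.2 q₀.2) * Real.exp ((Ke q₀.2 : ℝ) * T)) :=
        ((continuous_fst.dist continuous_const).add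
          (continuous_const.mul (continuous_snd.dist continuous_const))).mul continuous_const
      have := hcont.tendsto q₀
      simpa using this
    have heq : (fun ω => (θ t ω, η ω))
        = (fun q : ℝ × ℝ => (F q.1 q.2 t, q.2)) ∘ (fun ω => (θ 0 ω, η ω)) := by
      funext ω
      simp [Function.comp, hθsol ω t ht]
    rw [heq]
    exact ((hFc.prodMk continuous_snd).measurable).comp hmeas
  -- the conserved quantity along trajectories
  have hP : ∀ z : ℝ × ℝ × ℝ, HasFDerivAt (fun q : ℝ × ℝ × ℝ => p q.1 q.2.1 q.2.2)
      (fderiv ℝ (fun q : ℝ × ℝ × ℝ => p q.1 q.2.1 q.2.2) z) z :=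
    fun z => (hp.differentiable one_ne_zero z).hasFDerivAt
  have hconst : ∀ ω, ∀ t ∈ Set.Icc (0:ℝ) T, p t (θ t ω) (η ω) = p 0 (θ 0 ω) (η ω) := by
    intro ω
    have hg : ∀ t ∈ Set.Icc (0:ℝ) T, HasDerivAt (fun s => p s (θ s ω) (η ω)) 0 t := by
      intro t ht
      have hc : HasDerivAt (fun s => ((s, θ s ω, η ω) : ℝ × ℝ × ℝ))
          (1, thetaField (u t) (θ t ω) (η ω), 0) t :=
        HasDerivAt.prodMk (hasDerivAt_id t) (HasDerivAt.prodMk (hode ω t ht) (hasDerivAt_const t _))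
      have hcomp : HasDerivAt (fun s => p s (θ s ω) (η ω))
          (fderiv ℝ (fun q : ℝ × ℝ × ℝ => p q.1 q.2.1 q.2.2) (t, θ t ω, η ω)
            (1, thetaField (u t) (θ t ω) (η ω), 0)) t :=
        (hP _).comp_hasDerivAt t hc
      set D := fderiv ℝ (fun q : ℝ × ℝ × ℝ => p q.1 q.2.1 q.2.2) (t, θ t ω, η ω) with hD
      have h1 : deriv (fun s => p s (θ t ω) (η ω)) t = D (1, 0, 0) := by
        have : HasDerivAt (fun s => p s (θ t ω) (η ω)) (D (1, 0, 0)) t :=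
          (hP _).comp_hasDerivAt t
            (HasDerivAt.prodMk (hasDerivAt_id t) (HasDerivAt.prodMk (hasDerivAt_const t (θ t ω)) (hasDerivAt_const t (η ω))))
        exact this.deriv
      have h2 : deriv (fun a' => p t a' (η ω)) (θ t ω) = D (0, 1, 0) := by
        have : HasDerivAt (fun a' => p t a' (η ω)) (D (0, 1, 0)) (θ t ω) :=
          (hP _).comp_hasDerivAt (θ t ω)
            (HasDerivAt.prodMk (hasDerivAt_const (θ t ω) t)
              (HasDerivAt.prodMk (hasDerivAt_id (θ t ω)) (hasDerivAt_const (θ t ω) (η ω))))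
        exact this.deriv
      have hdecomp : D (1, thetaField (u t) (θ t ω) (η ω), 0)
          = D (1, 0, 0) + thetaField (u t) (θ t ω) (η ω) * D (0, 1, 0) := by
        have hsum : ((1:ℝ), thetaField (u t) (θ t ω) (η ω), (0:ℝ))
            = ((1:ℝ), (0:ℝ), (0:ℝ)) + thetaField (u t) (θ t ω) (η ω) • ((0:ℝ), (1:ℝ), (0:ℝ)) := by
          simp [Prod.ext_iff]
        rw [hsum, ContinuousLinearMap.map_add, ContinuousLinearMap.map_smul, smul_eq_mul]
      have hzero : D (1, thetaField (u t) (θ t ω) (η ω), 0) = 0 := by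
        have ht' := htrans t ht (θ t ω) (η ω)
        rw [h1, h2] at ht'
        rw [hdecomp, mul_comm]
        linarith
      rw [hzero] at hcomp
      exact hcomp
    intro t ht
    exact constant_of_has_deriv_right_zero
      (fun s hs => (hg s hs).continuousAt.continuousWithinAt)
      (fun s hs => (hg s (Set.mem_Icc_of_Ico hs)).hasDerivWithinAt) t ht
  -- conclusion
  intro t₁ ht₁ t₂ ht₂
  have hi : ∀ t ∈ Set.Icc (0:ℝ) T,
      ∫ x : ℝ × ℝ, p t x.1 x.2 ∂(μ t) = ∫ ω, p t (θ t ω) (η ω) ∂ℙ := by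
    intro t ht
    rw [hμ t]
    have hcont : Continuous (fun x : ℝ × ℝ => p t x.1 x.2) :=
      hp.continuous.comp (continuous_const.prodMk (continuous_fst.prodMk continuous_snd))
    rw [integral_map (hmeasθ t ht).aemeasurable hcont.aestronglyMeasurable]
  rw [hi t₁ ht₁, hi t₂ ht₂]
  exact integral_congr_ae (Filter.Eventually.of_forall fun ω => by
    show p t₁ (θ t₁ ω) (η ω) = p t₂ (θ t₂ ω) (η ω)
    rw [hconst ω t₁ ht₁, hconst ω t₂ ht₂])
end

section
/- (Exact increment formula.) Let T > 0, α > 0, θ̌: ℝ → ℝ be bounded continuous, and let u, ū: [0,T] → ℝ be continuous controls. Let (Ω, 𝔉, ℙ) be a probability space and let Θ_t(ω) = (θ_t(ω), η(ω)) and Θ̄_t(ω) = (θ̄_t(ω), η(ω)) be flows with Θ_0 = Θ̄_0 measurable, ∂_t θ_t(ω) = v_{u(t)}(θ_t(ω), η(ω)) and ∂_t θ̄_t(ω) = v_{ū(t)}(θ̄_t(ω), η(ω)) for all t, ω; set μ_t = (Θ_t)_♯ℙ and μ̄_t = (Θ̄_t)_♯ℙ, so μ_0 = μ̄_0. Let p̄: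 [0,T] × ℝ² → ℝ be continuously differentiable, bounded with bounded derivatives, solving ∂_t p̄ + ∂_θ p̄ · v_{ū(t)} = 0 with terminal condition p̄(T,θ,η) = −(1 − cos(θ − θ̌(η))). Define the cost I[u] = ∫ (1 − cos(θ − θ̌(η))) dμ_T(θ,η) + (α/2)∫₀ᵀ u(t)² dt and I[ū] analogously with μ̄_T and ū. Then I[u] − I[ū] = −∫₀ᵀ ( H(μ_t, ∂_θ p̄(t,·), u(t)) − H(μ_t, ∂_θ p̄(t,·), ū(t)) ) dt, where H(μ, ζ, w) = w·∫ ζ(θ,η)·(1 + cos θ) dμ(θ,η) − (α/2)·w². -/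
open MeasureTheory Real intervalIntegral

open Set NNReal

lemma thetaField_hasDerivAt (c e x : ℝ) :
    HasDerivAt (fun x => thetaField c x e) (Real.sin x * (1 - (c + e))) x := by
  have h1 : HasDerivAt (fun x => (1 - Real.cos x) + (1 + Real.cos x) * (c + e))
      (-(-Real.sin x) + -Real.sin x * (c + e)) x := by
    exact (((Real.hasDerivAt_cos x).const_sub 1)).add
      (((Real.hasDerivAt_cos x).const_add 1).mul_const _)
  convert h1 using 1
  · rfl
  · ring
lemma thetaField_lip (c e : ℝ) {M : ℝ} (hc : |c| ≤ M) :
    LipschitzWith (Real.toNNReal (M + |e| + 1)) (fun x => thetaField c x e) := by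
  apply lipschitzWith_of_nnnorm_deriv_le
  · intro x
    exact (thetaField_hasDerivAt c e x).differentiableAt
  · intro x
    rw [(thetaField_hasDerivAt c e x).deriv, ← NNReal.coe_le_coe]
    rw [Real.coe_toNNReal _ (by have := (abs_nonneg c).trans hc; positivity), coe_nnnorm, Real.norm_eq_abs]
    have h1 : |Real.sin x| ≤ 1 := Real.abs_sin_le_one x
    have h2 : |1 - (c + e)| ≤ 1 + (M + |e|) := by
      have := abs_add_le c e
      have h3 := abs_sub (1:ℝ) (c+e)
      calc |1 - (c+e)| ≤ |1| + |c+e| := abs_sub _ _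
        _ ≤ 1 + (M + |e|) := by
            rw [abs_one]; gcongr; exact (abs_add_le c e).trans (by gcongr)
    calc |Real.sin x * (1 - (c + e))| = |Real.sin x| * |1 - (c+e)| := abs_mul _ _
      _ ≤ 1 * (1 + (M + |e|)) := by
          apply mul_le_mul h1 h2 (abs_nonneg _) zero_le_one
      _ = M + |e| + 1 := by ring

lemma thetaField_sub (c c' x e : ℝ) :
    thetaField c x e - thetaField c' x e = (1 + Real.cos x) * (c - c') := by
  unfold thetaField; ring

lemma thetaField_sub_eta (c x e e' : ℝ) :
    thetaField c x e - thetaField c x e' = (1 + Real.cos x) * (e - e') := by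
  unfold thetaField; ring

lemma flow_measurable {T : ℝ} (hT : 0 < T) {u : ℝ → ℝ} {Mu : ℝ} (hMu : ∀ t, |u t| ≤ Mu)
    {Ω : Type*} [MeasurableSpace Ω] (θ : ℝ → Ω → ℝ) (η : Ω → ℝ)
    (hmeas : Measurable fun ω => (θ 0 ω, η ω))
    (hode : ∀ ω, ∀ t ∈ Icc (0:ℝ) T,
      HasDerivAt (fun s => θ s ω) (thetaField (u t) (θ t ω) (η ω)) t) :
    ∀ t ∈ Icc (0:ℝ) T, Measurable fun ω => θ t ω := by
  have hcont : ∀ ω, ContinuousOn (fun s => θ s ω) (Icc 0 T) :=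
    fun ω s hs => ((hode ω s hs).continuousAt).continuousWithinAt
  have hode' : ∀ ω, ∀ s ∈ Ico (0:ℝ) T,
      HasDerivWithinAt (fun s => θ s ω) (thetaField (u s) (θ s ω) (η ω)) (Ici s) s :=
    fun ω s hs => (hode ω s (Ico_subset_Icc_self hs)).hasDerivWithinAt
  -- uniqueness
  have huniq : ∀ ω ω', θ 0 ω = θ 0 ω' → η ω = η ω' → ∀ t ∈ Icc (0:ℝ) T, θ t ω = θ t ω' := by
    intro ω ω' h0 hη t ht
    have := ODE_solution_unique (v := fun t x => thetaField (u t) x (η ω'))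
      (K := Real.toNNReal (Mu + |η ω'| + 1))
      (fun t => thetaField_lip (u t) (η ω') (hMu t))
      (hcont ω) (by intro s hs; rw [← hη]; exact hode' ω s hs)
      (hcont ω') (hode' ω') h0
    exact this ht
  -- Gronwall estimate
  have hgron : ∀ ω ω', ∀ t ∈ Icc (0:ℝ) T,
      dist (θ t ω) (θ t ω') ≤ gronwallBound (dist ((θ 0 ω, η ω)) ((θ 0 ω', η ω')))
        (Real.toNNReal (Mu + |η ω'| + 1))
        (2 * dist ((θ 0 ω, η ω)) ((θ 0 ω', η ω')) + 0) (t - 0) := by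
    intro ω ω' t ht
    set d := dist ((θ 0 ω, η ω)) ((θ 0 ω', η ω')) with hd
    have hηd : dist (η ω) (η ω') ≤ d := le_max_right _ _
    apply dist_le_of_approx_trajectories_ODE (v := fun t x => thetaField (u t) x (η ω'))
      (K := Real.toNNReal (Mu + |η ω'| + 1))
      (fun t => thetaField_lip (u t) (η ω') (hMu t))
      (hcont ω) (hode' ω) ?_ (hcont ω') (hode' ω') ?_ (le_max_left _ _) t ht
    · intro s hs
      rw [Real.dist_eq, thetaField_sub_eta]
      calc |(1 + Real.cos (θ s ω)) * (η ω - η ω')| ≤ 2 * |η ω - η ω'| := by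
            rw [abs_mul]
            apply mul_le_mul_of_nonneg_right _ (abs_nonneg _)
            rw [abs_le]
            constructor <;> nlinarith [Real.neg_one_le_cos (θ s ω), Real.cos_le_one (θ s ω)]
        _ ≤ 2 * d := by rw [Real.dist_eq] at hηd; linarith
    · intro s hs
      simp [dist_self]
  intro t ht
  set e : Ω → ℝ × ℝ := fun ω => (θ 0 ω, η ω) with he
  have hFval : ∀ p : Set.range e, ∀ ω, e ω = (p : ℝ × ℝ) → θ t (p.2.choose) = θ t ω := by
    intro p ω hω
    have hspec : e (p.2.choose) = (p : ℝ × ℝ) := p.2.choose_spec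
    have heq : e (p.2.choose) = e ω := hspec.trans hω.symm
    have h1 : θ 0 (p.2.choose) = θ 0 ω := congrArg Prod.fst heq
    have h2 : η (p.2.choose) = η ω := congrArg Prod.snd heq
    exact huniq _ _ h1 h2 t ht
  set F : Set.range e → ℝ := fun p => θ t (p.2.choose) with hF
  have hFcont : Continuous F := by
    rw [Metric.continuous_iff]
    intro p' ε hε
    set K : ℝ≥0 := Real.toNNReal (Mu + |η (p'.2.choose)| + 1) with hK
    have hMu0 : 0 ≤ Mu := (abs_nonneg _).trans (hMu 0)
    have hK1 : (1:ℝ) ≤ (K : ℝ) := by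
      rw [hK, Real.coe_toNNReal _ (by positivity)]
      have := abs_nonneg (η (p'.2.choose)); linarith
    have hKpos : (0:ℝ) < K := lt_of_lt_of_le one_pos hK1
    have hexp1 : (1:ℝ) ≤ Real.exp (K * T) := by
      rw [← Real.exp_zero]; apply Real.exp_le_exp.2; positivity
    set C' : ℝ := Real.exp (K * T) + 2 / K * (Real.exp (K * T) - 1) with hC'
    have hC'pos : 0 < C' := by
      have h9 : (0:ℝ) ≤ 2 / K * (Real.exp (K * T) - 1) := by
        apply mul_nonneg (by positivity); linarith
      rw [hC']; linarith
    refine ⟨ε / C', by positivity, ?_⟩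
    intro p hp
    have hd : dist (p : ℝ × ℝ) (p' : ℝ × ℝ) = dist p p' := (Subtype.dist_eq p p').symm
    have hgb := hgron (p.2.choose) (p'.2.choose) t ht
    have hch : e (p.2.choose) = (p : ℝ × ℝ) := p.2.choose_spec
    have hch' : e (p'.2.choose) = (p' : ℝ × ℝ) := p'.2.choose_spec
    set d := dist (p : ℝ × ℝ) (p' : ℝ × ℝ) with hdd
    have h5 : dist ((θ 0 (p.2.choose), η (p.2.choose))) ((θ 0 (p'.2.choose), η (p'.2.choose))) = d := by
      rw [hdd, show ((θ 0 (p.2.choose), η (p.2.choose)) : ℝ × ℝ) = (p : ℝ × ℝ) from hch,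
        show ((θ 0 (p'.2.choose), η (p'.2.choose)) : ℝ × ℝ) = (p' : ℝ × ℝ) from hch']
    rw [h5] at hgb
    have hd0 : 0 ≤ d := dist_nonneg
    have hgb2 : gronwallBound d K (2 * d + 0) (t - 0)
        = d * Real.exp (K * (t - 0)) + (2 * d + 0) / K * (Real.exp (K * (t - 0)) - 1) := by
      rw [gronwallBound_of_K_ne_0 (by positivity)]
    have hexpt : Real.exp (K * (t - 0)) ≤ Real.exp (K * T) := by
      apply Real.exp_le_exp.2
      have := ht.2; have := ht.1
      nlinarith
    have hexpt1 : (1:ℝ) ≤ Real.exp (K * (t - 0)) := by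
      rw [← Real.exp_zero]; apply Real.exp_le_exp.2
      apply mul_nonneg (le_of_lt hKpos) (by linarith [ht.1])
    have hbound : gronwallBound d K (2 * d + 0) (t - 0) ≤ d * C' := by
      rw [hgb2, hC']
      have h2 : (2 * d + 0) / K * (Real.exp (K * (t-0)) - 1) ≤ 2 * d / K * (Real.exp (K*T) - 1) := by
        rw [add_zero]
        apply mul_le_mul_of_nonneg_left _ (by positivity)
        linarith
      have h1 : d * Real.exp (K * (t-0)) ≤ d * Real.exp (K * T) :=
        mul_le_mul_of_nonneg_left hexpt hd0
      have : d * (Real.exp (K*T) + 2 / K * (Real.exp (K*T) - 1))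
          = d * Real.exp (K*T) + 2 * d / K * (Real.exp (K*T) - 1) := by ring
      linarith
    have : dist (F p) (F p') ≤ d * C' := le_trans hgb hbound
    calc dist (F p) (F p') ≤ d * C' := this
      _ < (ε / C') * C' := by
          apply mul_lt_mul_of_pos_right _ hC'pos
          exact hd.trans_lt hp
      _ = ε := div_mul_cancel₀ ε (ne_of_gt hC'pos)
  have hsub : Measurable (fun ω => (⟨e ω, mem_range_self ω⟩ : Set.range e)) :=
    Measurable.subtype_mk hmeas
  have : (fun ω => θ t ω) = fun ω => F ⟨e ω, mem_range_self ω⟩ := by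
    funext ω
    exact (hFval ⟨e ω, mem_range_self ω⟩ ω rfl).symm
  rw [this]
  exact hFcont.measurable.comp hsub

theorem exact_increment_formula
    {T α : ℝ} (hT : 0 < T) (hα : 0 < α)
    (θcheck : ℝ → ℝ) (hθcheck : Continuous θcheck) (hθcheckbd : ∃ C, ∀ x, |θcheck x| ≤ C)
    (u ubar : ℝ → ℝ) (hu : ContinuousOn u (Set.Icc 0 T))
    (hubar : ContinuousOn ubar (Set.Icc 0 T))
    {Ω : Type*} [MeasurableSpace Ω] (ℙ : Measure Ω) [IsProbabilityMeasure ℙ]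
    (θ θbar : ℝ → Ω → ℝ) (η : Ω → ℝ)
    (hinit : ∀ ω, θ 0 ω = θbar 0 ω)
    (hmeas : Measurable (fun ω => (θ 0 ω, η ω)))
    (hode : ∀ ω : Ω, ∀ t ∈ Set.Icc (0 : ℝ) T,
      HasDerivAt (fun s => θ s ω) (thetaField (u t) (θ t ω) (η ω)) t)
    (hodebar : ∀ ω : Ω, ∀ t ∈ Set.Icc (0 : ℝ) T,
      HasDerivAt (fun s => θbar s ω) (thetaField (ubar t) (θbar t ω) (η ω)) t)
    (μ μbar : ℝ → Measure (ℝ × ℝ))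
    (hμ : ∀ t, μ t = Measure.map (fun ω => (θ t ω, η ω)) ℙ)
    (hμbar : ∀ t, μbar t = Measure.map (fun ω => (θbar t ω, η ω)) ℙ)
    (pbar : ℝ → ℝ → ℝ → ℝ)
    (hpbar : ContDiff ℝ 1 (fun q : ℝ × ℝ × ℝ => pbar q.1 q.2.1 q.2.2))
    (hpbarbd : ∃ C : ℝ, (∀ t a b : ℝ, |pbar t a b| ≤ C) ∧
      (∀ t a b : ℝ, ‖fderiv ℝ (fun q : ℝ × ℝ × ℝ => pbar q.1 q.2.1 q.2.2) (t, a, b)‖ ≤ C))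
    (htrans : ∀ t ∈ Set.Icc (0 : ℝ) T, ∀ a b : ℝ,
      deriv (fun s => pbar s a b) t
        + deriv (fun a' => pbar t a' b) a * thetaField (ubar t) a b = 0)
    (hterm : ∀ a b : ℝ, pbar T a b = -(1 - Real.cos (a - θcheck b))) :
    ((∫ x : ℝ × ℝ, (1 - Real.cos (x.1 - θcheck x.2)) ∂(μ T))
        + α / 2 * ∫ t in (0 : ℝ)..T, (u t) ^ 2)
      - ((∫ x : ℝ × ℝ, (1 - Real.cos (x.1 - θcheck x.2)) ∂(μbar T))
        + α / 2 * ∫ t in (0 : ℝ)..T, (ubar t) ^ 2)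
      = -∫ t in (0 : ℝ)..T,
          ((u t * ∫ x : ℝ × ℝ, deriv (fun a => pbar t a x.2) x.1 * (1 + Real.cos x.1) ∂(μ t)
              - α / 2 * (u t) ^ 2)
            - (ubar t * ∫ x : ℝ × ℝ, deriv (fun a => pbar t a x.2) x.1 * (1 + Real.cos x.1) ∂(μ t)
              - α / 2 * (ubar t) ^ 2)) := by
  -- basic setup: clamping, bounds
  have h0T : (0:ℝ) ∈ Icc (0:ℝ) T := ⟨le_refl 0, hT.le⟩
  have hTT : T ∈ Icc (0:ℝ) T := ⟨hT.le, le_refl T⟩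
  set cl : ℝ → ℝ := fun t => min (max t 0) T with hcl
  have hclcont : Continuous cl := (continuous_id.max continuous_const).min continuous_const
  have hclmem : ∀ t, cl t ∈ Icc (0:ℝ) T := fun t =>
    ⟨le_min (le_max_right t 0) hT.le, min_le_right _ _⟩
  have hcleq : ∀ t ∈ Icc (0:ℝ) T, cl t = t := by
    intro t ht
    simp only [hcl]
    rw [max_eq_left ht.1, min_eq_left ht.2]
  obtain ⟨Cu, hCu⟩ := isCompact_Icc.exists_bound_of_continuousOn hu
  obtain ⟨Cub, hCub⟩ := isCompact_Icc.exists_bound_of_continuousOn hubar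
  set Mu : ℝ := max Cu Cub with hMudef
  have hMu : ∀ t ∈ Icc (0:ℝ) T, |u t| ≤ Mu := fun t ht =>
    le_trans (by simpa [Real.norm_eq_abs] using hCu t ht) (le_max_left _ _)
  have hMub : ∀ t ∈ Icc (0:ℝ) T, |ubar t| ≤ Mu := fun t ht =>
    le_trans (by simpa [Real.norm_eq_abs] using hCub t ht) (le_max_right _ _)
  have hMu0 : 0 ≤ Mu := (abs_nonneg _).trans (hMu 0 h0T)
  set uc : ℝ → ℝ := fun t => u (cl t) with huc
  set ubc : ℝ → ℝ := fun t => ubar (cl t) with hubc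
  have huccont : Continuous uc := hu.comp_continuous hclcont hclmem
  have hubccont : Continuous ubc := hubar.comp_continuous hclcont hclmem
  have hMuc : ∀ t, |uc t| ≤ Mu := fun t => hMu _ (hclmem t)
  have hMubc : ∀ t, |ubc t| ≤ Mu := fun t => hMub _ (hclmem t)
  -- ODE with clamped controls (same on Icc)
  have hodec : ∀ ω, ∀ t ∈ Icc (0:ℝ) T,
      HasDerivAt (fun s => θ s ω) (thetaField (uc t) (θ t ω) (η ω)) t := by
    intro ω t ht; simp only [huc]; rw [hcleq t ht]; exact hode ω t ht
  have hodebarc : ∀ ω, ∀ t ∈ Icc (0:ℝ) T,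
      HasDerivAt (fun s => θbar s ω) (thetaField (ubc t) (θbar t ω) (η ω)) t := by
    intro ω t ht; simp only [hubc]; rw [hcleq t ht]; exact hodebar ω t ht
  -- measurability
  have hηmeas : Measurable η := measurable_snd.comp hmeas
  have hmeasbar : Measurable (fun ω => (θbar 0 ω, η ω)) := by
    have : (fun ω => (θbar 0 ω, η ω)) = fun ω => (θ 0 ω, η ω) := by
      funext ω; rw [hinit ω]
    rw [this]; exact hmeas
  have hθmeas : ∀ t ∈ Icc (0:ℝ) T, Measurable fun ω => θ t ω :=
    flow_measurable hT hMuc θ η hmeas hodec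
  have hθbarmeas : ∀ t ∈ Icc (0:ℝ) T, Measurable fun ω => θbar t ω :=
    flow_measurable hT hMubc θbar η hmeasbar hodebarc
  have hpair : ∀ t ∈ Icc (0:ℝ) T, Measurable fun ω => (θ t ω, η ω) :=
    fun t ht => (hθmeas t ht).prodMk hηmeas
  have hpairbar : ∀ t ∈ Icc (0:ℝ) T, Measurable fun ω => (θbar t ω, η ω) :=
    fun t ht => (hθbarmeas t ht).prodMk hηmeas
  have hθcont : ∀ ω, ContinuousOn (fun s => θ s ω) (Icc 0 T) :=
    fun ω s hs => ((hode ω s hs).continuousAt).continuousWithinAt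
  -- the value function and its derivatives
  set P : ℝ × ℝ × ℝ → ℝ := fun q => pbar q.1 q.2.1 q.2.2 with hPdef
  have hPdiff : Differentiable ℝ P := hpbar.differentiable one_ne_zero
  have hPcont : Continuous P := hpbar.continuous
  have hfdcont : Continuous (fderiv ℝ P) := hpbar.continuous_fderiv one_ne_zero
  have hP1 : ∀ c a b : ℝ, HasDerivAt (fun s => pbar s a b)
      (fderiv ℝ P (c, a, b) ((1:ℝ), (0:ℝ), (0:ℝ))) c := by
    intro c a b
    have hγ : HasDerivAt (fun s : ℝ => (s, a, b)) ((1:ℝ), (0:ℝ), (0:ℝ)) c :=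
      (hasDerivAt_id c).prodMk ((hasDerivAt_const c a).prodMk (hasDerivAt_const c b))
    exact (hPdiff (c, a, b)).hasFDerivAt.comp_hasDerivAt c hγ
  have hP2 : ∀ c a b : ℝ, HasDerivAt (fun a' => pbar c a' b)
      (fderiv ℝ P (c, a, b) ((0:ℝ), (1:ℝ), (0:ℝ))) a := by
    intro c a b
    have hγ : HasDerivAt (fun a' : ℝ => (c, a', b)) ((0:ℝ), (1:ℝ), (0:ℝ)) a :=
      (hasDerivAt_const a c).prodMk ((hasDerivAt_id a).prodMk (hasDerivAt_const a b))
    exact (hPdiff (c, a, b)).hasFDerivAt.comp_hasDerivAt a hγ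
  obtain ⟨C, hC0, hC1⟩ := hpbarbd
  have hCnn : 0 ≤ C := (abs_nonneg _).trans (hC0 0 0 0)
  have hnorm010 : ‖((0:ℝ), (1:ℝ), (0:ℝ))‖ = 1 := by
    simp [Prod.norm_def]
  have hDa_bd : ∀ c a b : ℝ, |fderiv ℝ P (c, a, b) ((0:ℝ), (1:ℝ), (0:ℝ))| ≤ C := by
    intro c a b
    calc |fderiv ℝ P (c, a, b) ((0:ℝ), (1:ℝ), (0:ℝ))|
        = ‖fderiv ℝ P (c, a, b) ((0:ℝ), (1:ℝ), (0:ℝ))‖ := rfl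
      _ ≤ ‖fderiv ℝ P (c, a, b)‖ * ‖((0:ℝ), (1:ℝ), (0:ℝ))‖ :=
          (fderiv ℝ P (c, a, b)).le_opNorm _
      _ ≤ C * 1 := by rw [hnorm010]; exact mul_le_mul_of_nonneg_right (hC1 c a b) zero_le_one
      _ = C := mul_one C
  -- chain rule along trajectories
  have hchain : ∀ (w : ℝ → ℝ) (v : ℝ) (ω : Ω), ∀ t ∈ Icc (0:ℝ) T,
      HasDerivAt (fun s => w s) v t →
      HasDerivAt (fun s => pbar s (w s) (η ω))
        (fderiv ℝ P (t, w t, η ω) ((1:ℝ), (0:ℝ), (0:ℝ))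
          + v * fderiv ℝ P (t, w t, η ω) ((0:ℝ), (1:ℝ), (0:ℝ))) t := by
    intro w v ω t ht hw
    have hγ : HasDerivAt (fun s : ℝ => (s, w s, η ω)) ((1:ℝ), v, (0:ℝ)) t :=
      (hasDerivAt_id t).prodMk (hw.prodMk (hasDerivAt_const t (η ω)))
    have hcomp := (hPdiff (t, w t, η ω)).hasFDerivAt.comp_hasDerivAt t hγ
    have hval : ((1:ℝ), v, (0:ℝ)) = ((1:ℝ), (0:ℝ), (0:ℝ)) + v • ((0:ℝ), (1:ℝ), (0:ℝ)) := by
      simp [Prod.ext_iff]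
    rw [hval, map_add, ContinuousLinearMap.map_smul, smul_eq_mul] at hcomp
    exact hcomp
  -- the exact derivative of t ↦ pbar t (θ t ω) (η ω)
  set D : ℝ → Ω → ℝ := fun t ω =>
    fderiv ℝ P (cl t, θ (cl t) ω, η ω) ((0:ℝ), (1:ℝ), (0:ℝ))
      * ((1 + Real.cos (θ (cl t) ω)) * (uc t - ubc t)) with hDdef
  have hder : ∀ ω, ∀ t ∈ Icc (0:ℝ) T,
      HasDerivAt (fun s => pbar s (θ s ω) (η ω)) (D t ω) t := by
    intro ω t ht
    have h1 := hchain (fun s => θ s ω) (thetaField (u t) (θ t ω) (η ω)) ω t ht (hode ω t ht)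
    have h2 := htrans t ht (θ t ω) (η ω)
    rw [(hP1 t (θ t ω) (η ω)).deriv, (hP2 t (θ t ω) (η ω)).deriv] at h2
    have h3 : D t ω = fderiv ℝ P (t, θ t ω, η ω) ((1:ℝ), (0:ℝ), (0:ℝ))
        + thetaField (u t) (θ t ω) (η ω)
          * fderiv ℝ P (t, θ t ω, η ω) ((0:ℝ), (1:ℝ), (0:ℝ)) := by
      rw [hDdef]
      simp only [hcleq t ht, huc, hubc]
      have h4 := thetaField_sub (u t) (ubar t) (θ t ω) (η ω)
      linear_combination (-(fderiv ℝ P (t, θ t ω, η ω) ((0:ℝ), (1:ℝ), (0:ℝ)))) * h4 - h2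
    rw [h3]
    exact h1
  have hderbar : ∀ ω, ∀ t ∈ Icc (0:ℝ) T,
      HasDerivAt (fun s => pbar s (θbar s ω) (η ω)) 0 t := by
    intro ω t ht
    have h1 := hchain (fun s => θbar s ω) (thetaField (ubar t) (θbar t ω) (η ω)) ω t ht
      (hodebar ω t ht)
    have h2 := htrans t ht (θbar t ω) (η ω)
    rw [(hP1 t (θbar t ω) (η ω)).deriv, (hP2 t (θbar t ω) (η ω)).deriv] at h2
    have h3 : (0:ℝ) = fderiv ℝ P (t, θbar t ω, η ω) ((1:ℝ), (0:ℝ), (0:ℝ))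
        + thetaField (ubar t) (θbar t ω) (η ω)
          * fderiv ℝ P (t, θbar t ω, η ω) ((0:ℝ), (1:ℝ), (0:ℝ)) := by
      linear_combination -h2
    rw [h3]
    exact h1
  -- continuity of D in t
  have hθclcont : ∀ ω, Continuous fun t => θ (cl t) ω :=
    fun ω => (hθcont ω).comp_continuous hclcont hclmem
  have hDcont : ∀ ω, Continuous fun t => D t ω := by
    intro ω
    have c1 : Continuous fun t => ((cl t, θ (cl t) ω, η ω) : ℝ × ℝ × ℝ) :=
      hclcont.prodMk ((hθclcont ω).prodMk continuous_const)
    exact ((hfdcont.comp c1).clm_apply continuous_const).mul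
      ((continuous_const.add (Real.continuous_cos.comp (hθclcont ω))).mul
        (huccont.sub hubccont))
  have hGcont : ∀ c : ℝ, Continuous fun x : ℝ × ℝ =>
      fderiv ℝ P (c, x.1, x.2) ((0:ℝ), (1:ℝ), (0:ℝ)) * (1 + Real.cos x.1) := by
    intro c
    exact ((hfdcont.comp (continuous_const.prodMk
      (continuous_fst.prodMk continuous_snd))).clm_apply continuous_const).mul
      (continuous_const.add (Real.continuous_cos.comp continuous_fst))
  have hDmeas : ∀ t, Measurable fun ω => D t ω := by
    intro t
    have m1 : Measurable fun ω => ((θ (cl t) ω, η ω) : ℝ × ℝ) := hpair _ (hclmem t)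
    have he : (fun ω => D t ω) = (fun x : ℝ × ℝ =>
        fderiv ℝ P (cl t, x.1, x.2) ((0:ℝ), (1:ℝ), (0:ℝ))
          * ((1 + Real.cos x.1) * (uc t - ubc t))) ∘ (fun ω => (θ (cl t) ω, η ω)) := by
      funext ω; rfl
    rw [he]
    exact (((hfdcont.comp (continuous_const.prodMk
      (continuous_fst.prodMk continuous_snd))).clm_apply continuous_const).mul
      ((continuous_const.add (Real.continuous_cos.comp continuous_fst)).mul
        continuous_const)).measurable.comp m1
  have hDbd : ∀ t ω, |D t ω| ≤ C * (2 * (Mu + Mu)) := by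
    intro t ω
    rw [hDdef]
    simp only
    rw [abs_mul]
    apply mul_le_mul (hDa_bd _ _ _) _ (abs_nonneg _) hCnn
    rw [abs_mul]
    have h1 : |1 + Real.cos (θ (cl t) ω)| ≤ 2 := by
      rw [abs_le]
      constructor <;>
        nlinarith [Real.neg_one_le_cos (θ (cl t) ω), Real.cos_le_one (θ (cl t) ω)]
    have h2 : |uc t - ubc t| ≤ Mu + Mu := (abs_sub _ _).trans (add_le_add (hMuc t) (hMubc t))
    exact mul_le_mul h1 h2 (abs_nonneg _) (by norm_num)
  have hjoint : Measurable (Function.uncurry D) :=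
    measurable_uncurry_of_continuous_of_measurable hDcont hDmeas
  set ν : Measure ℝ := volume.restrict (Ioc 0 T) with hν
  have hprodInt : Integrable (fun z : Ω × ℝ => D z.2 z.1) (ℙ.prod ν) := by
    refine ⟨(hjoint.comp measurable_swap).aestronglyMeasurable, ?_⟩
    apply HasFiniteIntegral.of_bounded (C := C * (2 * (Mu + Mu)))
    exact Filter.Eventually.of_forall fun z => by
      simpa [Real.norm_eq_abs] using hDbd z.2 z.1
  have hswap : ∫ ω, ∫ t, D t ω ∂ν ∂ℙ = ∫ t, ∫ ω, D t ω ∂ℙ ∂ν :=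
    integral_integral_swap (by exact hprodInt)
  set g : ℝ → ℝ := fun t => ∫ ω, D t ω ∂ℙ with hg
  have hgint : Integrable g ν := by
    have h := hprodInt.integral_prod_right
    exact h
  -- FTC pointwise in ω
  have hFTC : ∀ ω, (∫ t in (0:ℝ)..T, D t ω)
      = pbar T (θ T ω) (η ω) - pbar 0 (θ 0 ω) (η ω) := by
    intro ω
    apply intervalIntegral.integral_eq_sub_of_hasDerivAt
    · intro t ht
      rw [uIcc_of_le hT.le] at ht
      exact hder ω t ht
    · exact (hDcont ω).intervalIntegrable _ _
  have hconstbar : ∀ ω, pbar T (θbar T ω) (η ω) = pbar 0 (θbar 0 ω) (η ω) := by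
    intro ω
    have h0 : (∫ _t in (0:ℝ)..T, (0:ℝ))
        = pbar T (θbar T ω) (η ω) - pbar 0 (θbar 0 ω) (η ω) := by
      apply intervalIntegral.integral_eq_sub_of_hasDerivAt
      · intro t ht
        rw [uIcc_of_le hT.le] at ht
        exact hderbar ω t ht
      · exact intervalIntegrable_const
    simp only [intervalIntegral.integral_zero] at h0
    linarith
  -- integrability of slices
  have hintP : ∀ t ∈ Icc (0:ℝ) T, Integrable (fun ω => pbar t (θ t ω) (η ω)) ℙ := by
    intro t ht
    have hm : Measurable fun ω => pbar t (θ t ω) (η ω) := by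
      have he : (fun ω => pbar t (θ t ω) (η ω)) = fun ω => P (t, θ t ω, η ω) := rfl
      rw [he]
      exact hPcont.measurable.comp (measurable_const.prodMk (hpair t ht))
    refine ⟨hm.aestronglyMeasurable, ?_⟩
    apply HasFiniteIntegral.of_bounded (C := C)
    exact Filter.Eventually.of_forall fun ω => by
      simpa [Real.norm_eq_abs] using hC0 t (θ t ω) (η ω)
  -- Identity A
  have hA : (∫ ω, pbar T (θ T ω) (η ω) ∂ℙ) - (∫ ω, pbar 0 (θ 0 ω) (η ω) ∂ℙ)
      = ∫ t in (0:ℝ)..T, g t := by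
    rw [← integral_sub (hintP T hTT) (hintP 0 h0T)]
    have h1 : ∫ ω, (pbar T (θ T ω) (η ω) - pbar 0 (θ 0 ω) (η ω)) ∂ℙ
        = ∫ ω, (∫ t, D t ω ∂ν) ∂ℙ := by
      apply MeasureTheory.integral_congr_ae
      apply Filter.Eventually.of_forall
      intro ω
      show pbar T (θ T ω) (η ω) - pbar 0 (θ 0 ω) (η ω) = ∫ t, D t ω ∂ν
      rw [← hFTC ω, intervalIntegral.integral_of_le hT.le]
    rw [h1, hswap, intervalIntegral.integral_of_le hT.le]
  -- Identity B : g t in terms of the measure μ t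
  have hB : ∀ t ∈ Icc (0:ℝ) T, g t = (u t - ubar t)
      * ∫ x : ℝ × ℝ, fderiv ℝ P (t, x.1, x.2) ((0:ℝ), (1:ℝ), (0:ℝ))
          * (1 + Real.cos x.1) ∂(μ t) := by
    intro t ht
    have h1 : ∀ ω, D t ω = (u t - ubar t) *
        ((fun x : ℝ × ℝ => fderiv ℝ P (t, x.1, x.2) ((0:ℝ), (1:ℝ), (0:ℝ))
          * (1 + Real.cos x.1)) ((θ t ω, η ω))) := by
      intro ω
      rw [hDdef]
      simp only [huc, hubc, hcleq t ht]
      ring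
    have h2 : g t = ∫ ω, (u t - ubar t) *
        ((fun x : ℝ × ℝ => fderiv ℝ P (t, x.1, x.2) ((0:ℝ), (1:ℝ), (0:ℝ))
          * (1 + Real.cos x.1)) ((θ t ω, η ω))) ∂ℙ := by
      rw [hg]
      exact MeasureTheory.integral_congr_ae (Filter.Eventually.of_forall h1)
    rw [h2, MeasureTheory.integral_const_mul]
    congr 1
    rw [hμ t]
    exact (integral_map (hpair t ht).aemeasurable
      ((hGcont t).aestronglyMeasurable)).symm
  -- terminal values
  have hcost : ∀ (w : ℝ → Ω → ℝ), Measurable (fun ω => (w T ω, η ω)) →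
      (∫ x : ℝ × ℝ, (1 - Real.cos (x.1 - θcheck x.2))
          ∂(Measure.map (fun ω => (w T ω, η ω)) ℙ))
        = - ∫ ω, pbar T (w T ω) (η ω) ∂ℙ := by
    intro w hw
    have hcont : Continuous fun x : ℝ × ℝ => 1 - Real.cos (x.1 - θcheck x.2) :=
      continuous_const.sub (Real.continuous_cos.comp
        (continuous_fst.sub (hθcheck.comp continuous_snd)))
    rw [integral_map hw.aemeasurable hcont.aestronglyMeasurable, ← MeasureTheory.integral_neg]
    apply MeasureTheory.integral_congr_ae
    apply Filter.Eventually.of_forall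
    intro ω
    show 1 - Real.cos (w T ω - θcheck (η ω)) = - pbar T (w T ω) (η ω)
    rw [hterm]
    ring
  have hIT : (∫ x : ℝ × ℝ, (1 - Real.cos (x.1 - θcheck x.2)) ∂(μ T))
      = - ∫ ω, pbar T (θ T ω) (η ω) ∂ℙ := by
    rw [hμ T]; exact hcost θ (hpair T hTT)
  have hJT : (∫ x : ℝ × ℝ, (1 - Real.cos (x.1 - θcheck x.2)) ∂(μbar T))
      = - ∫ ω, pbar T (θbar T ω) (η ω) ∂ℙ := by
    rw [hμbar T]; exact hcost θbar (hpairbar T hTT)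
  have hJ0 : (∫ ω, pbar T (θbar T ω) (η ω) ∂ℙ) = ∫ ω, pbar 0 (θ 0 ω) (η ω) ∂ℙ := by
    apply MeasureTheory.integral_congr_ae
    apply Filter.Eventually.of_forall
    intro ω
    show pbar T (θbar T ω) (η ω) = pbar 0 (θ 0 ω) (η ω)
    rw [hconstbar ω, hinit ω]
  -- interval integrability facts
  have hgInt : IntervalIntegrable g volume 0 T := by
    rw [intervalIntegrable_iff, uIoc_of_le hT.le]
    exact hgint
  have hu2 : IntervalIntegrable (fun t => u t ^ 2) volume 0 T := by
    apply ContinuousOn.intervalIntegrable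
    rw [uIcc_of_le hT.le]
    exact hu.pow 2
  have hub2 : IntervalIntegrable (fun t => ubar t ^ 2) volume 0 T := by
    apply ContinuousOn.intervalIntegrable
    rw [uIcc_of_le hT.le]
    exact hubar.pow 2
  have hcInt : IntervalIntegrable (fun t => α / 2 * u t ^ 2 - α / 2 * ubar t ^ 2) volume 0 T :=
    (hu2.const_mul (α / 2)).sub (hub2.const_mul (α / 2))
  -- rewriting the right-hand side
  have hRHS : (∫ t in (0:ℝ)..T,
        ((u t * ∫ x : ℝ × ℝ, deriv (fun a => pbar t a x.2) x.1 * (1 + Real.cos x.1) ∂(μ t)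
            - α / 2 * (u t) ^ 2)
          - (ubar t * ∫ x : ℝ × ℝ, deriv (fun a => pbar t a x.2) x.1 * (1 + Real.cos x.1) ∂(μ t)
            - α / 2 * (ubar t) ^ 2)))
      = (∫ t in (0:ℝ)..T, g t)
        - (α / 2 * (∫ t in (0:ℝ)..T, u t ^ 2) - α / 2 * (∫ t in (0:ℝ)..T, ubar t ^ 2)) := by
    have hcongr : ∀ t ∈ Icc (0:ℝ) T,
        ((u t * ∫ x : ℝ × ℝ, deriv (fun a => pbar t a x.2) x.1 * (1 + Real.cos x.1) ∂(μ t)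
            - α / 2 * (u t) ^ 2)
          - (ubar t * ∫ x : ℝ × ℝ, deriv (fun a => pbar t a x.2) x.1 * (1 + Real.cos x.1) ∂(μ t)
            - α / 2 * (ubar t) ^ 2))
        = g t - (α / 2 * u t ^ 2 - α / 2 * ubar t ^ 2) := by
      intro t ht
      have hd : (∫ x : ℝ × ℝ, deriv (fun a => pbar t a x.2) x.1 * (1 + Real.cos x.1) ∂(μ t))
          = ∫ x : ℝ × ℝ, fderiv ℝ P (t, x.1, x.2) ((0:ℝ), (1:ℝ), (0:ℝ))
              * (1 + Real.cos x.1) ∂(μ t) := by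
        apply MeasureTheory.integral_congr_ae
        apply Filter.Eventually.of_forall
        intro x
        show deriv (fun a => pbar t a x.2) x.1 * (1 + Real.cos x.1) = _
        rw [(hP2 t x.1 x.2).deriv]
      rw [hd, hB t ht]
      ring
    rw [intervalIntegral.integral_congr (g := fun t => g t - (α / 2 * u t ^ 2 - α / 2 * ubar t ^ 2))
      (fun t ht => hcongr t (by rwa [uIcc_of_le hT.le] at ht))]
    rw [intervalIntegral.integral_sub hgInt hcInt,
      intervalIntegral.integral_sub (hu2.const_mul (α / 2)) (hub2.const_mul (α / 2)),
      intervalIntegral.integral_const_mul, intervalIntegral.integral_const_mul]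
  -- final assembly
  rw [hIT, hJT, hJ0, hRHS]
  linarith [hA]
end

section
/- (Control improvement / descent property.) Under the hypotheses of the exact increment formula — T > 0, α > 0, θ̌: ℝ → ℝ bounded continuous; u, ū: [0,T] → ℝ continuous; μ_t = (Θ_t)_♯ℙ and μ̄_t = (Θ̄_t)_♯ℙ the pushforward solutions of the continuity equation driven by u and ū respectively with the same initial measure; p̄ a bounded C¹ solution with bounded derivatives of ∂_t p̄ + ∂_θ p̄ · v_{ū(t)} = 0 with p̄(T,θ,η) = −(1 − cos(θ − θ̌(η))) — suppose additionally that u satisfies the feedback fixed-point relation u(t) = (1/α)·∫ ∂_θ p̄(t,θ,η)·(1 + cos θ) dμ_t(θ,η) for all t ∈ [0,T]. Then I[u] = I[ū] − (α/2)·∫₀ᵀ (u(t) − ū(t))² dt; in particular I[u] ≤ I[ū], with strict inequality unless u = ū almost everywhere on [0,T]. -/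
open MeasureTheory Real intervalIntegral

lemma thetaField_sub_ctrl (v w x e : ℝ) :
    thetaField v x e - thetaField w x e = (1 + Real.cos x) * (v - w) := by
  unfold thetaField; ring

lemma abs_thetaField_le (v x e : ℝ) : |thetaField v x e| ≤ 2 + 2 * (|v| + |e|) := by
  unfold thetaField
  have h1 := Real.cos_le_one x
  have h2 := Real.neg_one_le_cos x
  calc |(1 - Real.cos x) + (1 + Real.cos x) * (v + e)|
      ≤ |1 - Real.cos x| + |(1 + Real.cos x) * (v + e)| := abs_add_le _ _
    _ = |1 - Real.cos x| + |1 + Real.cos x| * |v + e| := by rw [abs_mul]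
    _ ≤ 2 + 2 * (|v| + |e|) := by
        have ha : |1 - Real.cos x| ≤ 2 := by rw [abs_le]; constructor <;> linarith
        have hb : |1 + Real.cos x| ≤ 2 := by rw [abs_le]; constructor <;> linarith
        have hc : |v + e| ≤ |v| + |e| := abs_add_le _ _
        have := mul_le_mul hb hc (abs_nonneg _) (by norm_num)
        linarith

lemma abs_cos_sub_cos_le (x y : ℝ) : |Real.cos x - Real.cos y| ≤ |x - y| := by
  rw [Real.cos_sub_cos]
  rw [abs_mul, abs_mul, abs_neg]
  have h1 : |Real.sin ((x + y) / 2)| ≤ 1 := Real.abs_sin_le_one _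
  have h2 : |Real.sin ((x - y) / 2)| ≤ |(x - y) / 2| := Real.abs_sin_le_abs
  calc |(2:ℝ)| * |Real.sin ((x + y) / 2)| * |Real.sin ((x - y) / 2)|
      ≤ |(2:ℝ)| * 1 * |(x - y) / 2| := by
        apply mul_le_mul _ h2 (abs_nonneg _) (by positivity)
        exact mul_le_mul_of_nonneg_left h1 (abs_nonneg _)
    _ = |x - y| := by rw [abs_div, abs_two]; ring

lemma thetaField_lip_s14 (v x y e : ℝ) :
    |thetaField v x e - thetaField v y e| ≤ (1 + |v| + |e|) * |x - y| := by
  have hkey : thetaField v x e - thetaField v y e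
      = (Real.cos y - Real.cos x) * (1 - (v + e)) := by unfold thetaField; ring
  rw [hkey, abs_mul]
  have h1 : |Real.cos y - Real.cos x| ≤ |x - y| := by
    have := _root_.abs_cos_sub_cos_le y x; rwa [abs_sub_comm y x] at this
  have h2 : |1 - (v + e)| ≤ 1 + |v| + |e| := by
    calc |1 - (v + e)| ≤ |(1:ℝ)| + |v + e| := abs_sub _ _
      _ ≤ 1 + (|v| + |e|) := by simpa using add_le_add_left (abs_add_le v e) 1
      _ = 1 + |v| + |e| := by ring
  calc |Real.cos y - Real.cos x| * |1 - (v + e)|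
      ≤ |x - y| * (1 + |v| + |e|) :=
        mul_le_mul h1 h2 (abs_nonneg _) (abs_nonneg _)
    _ = (1 + |v| + |e|) * |x - y| := mul_comm _ _

lemma thetaField_continuous : Continuous (fun p : ℝ × ℝ × ℝ => thetaField p.1 p.2.1 p.2.2) := by
  unfold thetaField; fun_prop

noncomputable def picard {Ω : Type*} (θ0 η : Ω → ℝ) (w' c : ℝ → ℝ) : ℕ → ℝ → Ω → ℝ
  | 0 => fun _ ω => θ0 ω
  | (n+1) => fun t ω =>
      θ0 ω + ∫ s in (0:ℝ)..(c t), thetaField (w' s) (picard θ0 η w' c n s ω) (η ω)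

set_option maxHeartbeats 1000000 in
lemma theta_measurable {T : ℝ} (hT : 0 < T) {w : ℝ → ℝ} (hw : ContinuousOn w (Set.Icc 0 T))
    {Ω : Type*} [MeasurableSpace Ω] (θ : ℝ → Ω → ℝ) (η : Ω → ℝ)
    (hθ0 : Measurable (θ 0)) (hη : Measurable η)
    (hode : ∀ ω, ∀ t ∈ Set.Icc (0:ℝ) T,
      HasDerivAt (fun s => θ s ω) (thetaField (w t) (θ t ω) (η ω)) t) :
    ∀ t ∈ Set.Icc (0:ℝ) T, Measurable fun ω => θ t ω := by
  classical
  -- clamp function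
  set c : ℝ → ℝ := fun s => max 0 (min s T) with hc
  have hc_cont : Continuous c := continuous_const.max (continuous_id.min continuous_const)
  have hc_mem : ∀ s, c s ∈ Set.Icc (0:ℝ) T := fun s =>
    ⟨le_max_left _ _, max_le hT.le (min_le_right _ _)⟩
  have hc_eq : ∀ s ∈ Set.Icc (0:ℝ) T, c s = s := by
    intro s hs
    simp only [hc]
    rw [min_eq_left hs.2, max_eq_right hs.1]
  -- bound on the control
  obtain ⟨U0, hU0⟩ := isCompact_Icc.exists_bound_of_continuousOn hw
  set U : ℝ := max U0 0 with hU
  have hUw : ∀ s ∈ Set.Icc (0:ℝ) T, |w s| ≤ U := fun s hs => (hU0 s hs).trans (le_max_left _ _)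
  have hU0' : (0:ℝ) ≤ U := le_max_right _ _
  -- clamped control
  set w' : ℝ → ℝ := fun s => w (c s) with hw'def
  have hw'_cont : Continuous w' := hw.comp_continuous hc_cont hc_mem
  have hw'_eq : ∀ s ∈ Set.Icc (0:ℝ) T, w' s = w s := by
    intro s hs; simp only [hw'def]; rw [hc_eq s hs]
  -- continuity of trajectories
  have hθc : ∀ ω, ContinuousOn (fun s => θ s ω) (Set.Icc (0:ℝ) T) := fun ω s hs =>
    ((hode ω s hs).continuousAt).continuousWithinAt
  -- continuity of the integrand along the true solution
  have hF : ∀ ω, ContinuousOn (fun s => thetaField (w s) (θ s ω) (η ω)) (Set.Icc (0:ℝ) T) := by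
    intro ω
    unfold thetaField
    exact (continuousOn_const.sub (Real.continuous_cos.comp_continuousOn (hθc ω))).add
      ((continuousOn_const.add (Real.continuous_cos.comp_continuousOn (hθc ω))).mul
        (hw.add continuousOn_const))
  -- the integral equation for the true solution
  have hinteq : ∀ ω, ∀ t ∈ Set.Icc (0:ℝ) T,
      θ t ω = θ 0 ω + ∫ s in (0:ℝ)..t, thetaField (w s) (θ s ω) (η ω) := by
    intro ω t ht
    have hsub : Set.uIcc (0:ℝ) t ⊆ Set.Icc 0 T := by
      rw [Set.uIcc_of_le ht.1]
      exact Set.Icc_subset_Icc le_rfl ht.2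
    have hfd := intervalIntegral.integral_eq_sub_of_hasDerivAt
      (f := fun s => θ s ω) (f' := fun s => thetaField (w s) (θ s ω) (η ω))
      (fun s hs => hode ω s (hsub hs))
      (((hF ω).mono hsub).intervalIntegrable)
    linarith [hfd]
  -- Picard iterates
  set ψ : ℕ → ℝ → Ω → ℝ := picard (θ 0) η w' c with hψdef
  have hψ0 : ∀ t ω, ψ 0 t ω = θ 0 ω := fun _ _ => by simp only [hψdef, picard]
  have hψs : ∀ n t ω, ψ (n+1) t ω
      = θ 0 ω + ∫ s in (0:ℝ)..(c t), thetaField (w' s) (ψ n s ω) (η ω) :=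
    fun _ _ _ => by simp only [hψdef, picard]
  -- continuity and measurability of the iterates
  have hmain : ∀ n : ℕ, (∀ ω, Continuous (fun t => ψ n t ω)) ∧ (∀ t, Measurable (fun ω => ψ n t ω)) := by
    intro n
    induction n with
    | zero => exact ⟨fun ω => continuous_const, fun t => hθ0⟩
    | succ n ih =>
      obtain ⟨ihc, ihm⟩ := ih
      have hjoint : StronglyMeasurable (fun p : ℝ × Ω => ψ n p.1 p.2) :=
        stronglyMeasurable_uncurry_of_continuous_of_stronglyMeasurable
          (u := fun t ω => ψ n t ω) (fun ω => ihc ω) (fun t => (ihm t).stronglyMeasurable)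
      have hGjoint : StronglyMeasurable
          (fun p : ℝ × Ω => thetaField (w' p.1) (ψ n p.1 p.2) (η p.2)) := by
        have h1 : StronglyMeasurable (fun p : ℝ × Ω => (w' p.1, ψ n p.1 p.2, η p.2)) :=
          (hw'_cont.stronglyMeasurable.comp_measurable measurable_fst).prodMk
            (hjoint.prodMk ((hη.comp measurable_snd).stronglyMeasurable))
        have h2 := thetaField_continuous.comp_stronglyMeasurable h1
        simpa using h2
      constructor
      · intro ω
        have hFc : Continuous (fun s => thetaField (w' s) (ψ n s ω) (η ω)) := by
          have h2 := thetaField_continuous.comp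
            (hw'_cont.prodMk ((ihc ω).prodMk (continuous_const (y := η ω))))
          exact h2
        have hprim : Continuous (fun x : ℝ => ∫ s in (0:ℝ)..x, thetaField (w' s) (ψ n s ω) (η ω)) := by
          rw [continuous_iff_continuousAt]
          intro x
          exact (intervalIntegral.integral_hasDerivAt_right
            (hFc.intervalIntegrable _ _)
            (hFc.stronglyMeasurable.stronglyMeasurableAtFilter)
            hFc.continuousAt).continuousAt
        have : (fun t => ψ (n+1) t ω)
            = fun t => θ 0 ω + (fun x : ℝ => ∫ s in (0:ℝ)..x,
                thetaField (w' s) (ψ n s ω) (η ω)) (c t) := by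
          funext t; rw [hψs]
        rw [this]
        exact continuous_const.add (hprim.comp hc_cont)
      · intro t
        have h0 : (0:ℝ) ≤ c t := (hc_mem t).1
        have heq : (fun ω => ψ (n+1) t ω)
            = fun ω => θ 0 ω + ∫ s in Set.Ioc (0:ℝ) (c t),
                thetaField (w' s) (ψ n s ω) (η ω) := by
          funext ω
          rw [hψs, intervalIntegral.integral_of_le h0]
        rw [heq]
        apply hθ0.add
        have hsm : StronglyMeasurable (fun q : Ω × ℝ => thetaField (w' q.2) (ψ n q.2 q.1) (η q.1)) := by
          have h3 := hGjoint.comp_measurable (measurable_swap (α := Ω) (β := ℝ))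
          exact h3
        exact (hsm.integral_prod_right' (ν := volume.restrict (Set.Ioc (0:ℝ) (c t)))).measurable
  -- convergence of the Picard iterates
  intro t ht
  have key : ∀ ω, Filter.Tendsto (fun n => ψ n t ω) Filter.atTop (nhds (θ t ω)) := by
    intro ω
    set e : ℝ := |η ω| with he
    have he0 : (0:ℝ) ≤ e := abs_nonneg _
    set L : ℝ := 1 + U + e with hL
    set M : ℝ := (2 + 2*(U + e)) * T with hM
    have hL0 : (0:ℝ) ≤ L := by simp only [hL]; linarith
    have hM0 : (0:ℝ) ≤ M := by
      simp only [hM]; apply mul_nonneg (by linarith) hT.le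
    have hbound : ∀ n, ∀ s ∈ Set.Icc (0:ℝ) T,
        |ψ n s ω - θ s ω| ≤ M * L^n * s^n / n.factorial := by
      intro n
      induction n with
      | zero =>
        intro s hs
        simp only [hψ0, pow_zero, Nat.factorial_zero, Nat.cast_one, mul_one, div_one]
        have hieq := hinteq ω s hs
        have hb : ∀ r ∈ Set.uIoc (0:ℝ) s, ‖thetaField (w r) (θ r ω) (η ω)‖ ≤ 2 + 2*(U+e) := by
          intro r hr
          rw [Set.uIoc_of_le hs.1] at hr
          have hr' : r ∈ Set.Icc (0:ℝ) T := ⟨hr.1.le, hr.2.trans hs.2⟩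
          have h1 := abs_thetaField_le (w r) (θ r ω) (η ω)
          have h2 := hUw r hr'
          calc ‖thetaField (w r) (θ r ω) (η ω)‖ = |thetaField (w r) (θ r ω) (η ω)| := rfl
            _ ≤ 2 + 2 * (|w r| + e) := by rw [← he] at h1; exact h1
            _ ≤ 2 + 2 * (U + e) := by linarith
        have h2 : ‖∫ r in (0:ℝ)..s, thetaField (w r) (θ r ω) (η ω)‖ ≤ (2+2*(U+e)) * |s - 0| :=
          intervalIntegral.norm_integral_le_of_norm_le_const hb
        have h3 : |θ 0 ω - θ s ω| = ‖∫ r in (0:ℝ)..s, thetaField (w r) (θ r ω) (η ω)‖ := by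
          rw [abs_sub_comm]
          have : θ s ω - θ 0 ω = ∫ r in (0:ℝ)..s, thetaField (w r) (θ r ω) (η ω) := by
            linarith [hieq]
          rw [← this]; rfl
        rw [h3]
        have hs' : |s - 0| ≤ T := by
          rw [sub_zero, abs_of_nonneg hs.1]; exact hs.2
        calc ‖∫ r in (0:ℝ)..s, thetaField (w r) (θ r ω) (η ω)‖
            ≤ (2+2*(U+e)) * |s - 0| := h2
          _ ≤ (2+2*(U+e)) * T := by
              apply mul_le_mul_of_nonneg_left hs' (by linarith)
          _ = M := hM.symm
      | succ n ihn =>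
        intro s hs
        have hceq := hc_eq s hs
        have hF1c : Continuous (fun r => thetaField (w' r) (ψ n r ω) (η ω)) := by
          have h2 := thetaField_continuous.comp
            (hw'_cont.prodMk (((hmain n).1 ω).prodMk (continuous_const (y := η ω))))
          exact h2
        have hsub : Set.uIcc (0:ℝ) s ⊆ Set.Icc 0 T := by
          rw [Set.uIcc_of_le hs.1]; exact Set.Icc_subset_Icc le_rfl hs.2
        have hF2i : IntervalIntegrable (fun r => thetaField (w r) (θ r ω) (η ω)) volume 0 s :=
          ((hF ω).mono hsub).intervalIntegrable
        have hdiff : ψ (n+1) s ω - θ s ω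
            = ∫ r in (0:ℝ)..s, (thetaField (w' r) (ψ n r ω) (η ω)
                - thetaField (w r) (θ r ω) (η ω)) := by
          rw [hψs, hceq, hinteq ω s hs,
            intervalIntegral.integral_sub (hF1c.intervalIntegrable _ _) hF2i]
          ring
        rw [hdiff]
        have hgint : IntervalIntegrable
            (fun r => (L * (M * L^n / n.factorial)) * r^n) volume 0 s :=
          ((continuous_const.mul (continuous_pow n)).intervalIntegrable _ _)
        have hae : ∀ᵐ r ∂(volume.restrict (Set.uIoc (0:ℝ) s)),
            ‖thetaField (w' r) (ψ n r ω) (η ω) - thetaField (w r) (θ r ω) (η ω)‖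
              ≤ (L * (M * L^n / n.factorial)) * r^n := by
          refine (ae_restrict_mem measurableSet_uIoc).mono ?_
          intro r hr
          rw [Set.uIoc_of_le hs.1] at hr
          have hr' : r ∈ Set.Icc (0:ℝ) T := ⟨hr.1.le, hr.2.trans hs.2⟩
          rw [hw'_eq r hr']
          have hlip := thetaField_lip_s14 (w r) (ψ n r ω) (θ r ω) (η ω)
          have hLw : 1 + |w r| + e ≤ L := by
            have := hUw r hr'; simp only [hL]; linarith
          have hihn := ihn r hr'
          have hr0 : (0:ℝ) ≤ r := hr.1.le
          calc ‖thetaField (w r) (ψ n r ω) (η ω) - thetaField (w r) (θ r ω) (η ω)‖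
              = |thetaField (w r) (ψ n r ω) (η ω) - thetaField (w r) (θ r ω) (η ω)| := rfl
            _ ≤ (1 + |w r| + e) * |ψ n r ω - θ r ω| := by rw [← he] at hlip; exact hlip
            _ ≤ L * (M * L^n * r^n / n.factorial) := by
                apply mul_le_mul hLw hihn (abs_nonneg _) hL0
            _ = (L * (M * L^n / n.factorial)) * r^n := by ring
        have hni := intervalIntegral.norm_integral_le_abs_of_norm_le hae hgint
        have hgval : ∫ r in (0:ℝ)..s, (L * (M * L^n / n.factorial)) * r^n
            = (L * (M * L^n / n.factorial)) * (s^(n+1) / (n+1)) := by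
          rw [intervalIntegral.integral_const_mul, integral_pow]
          norm_num
        have hfac : ((n+1).factorial : ℝ) = (n+1) * n.factorial := by
          rw [Nat.factorial_succ]; push_cast; ring
        have hfin : (L * (M * L^n / n.factorial)) * (s^(n+1) / (n+1))
            = M * L^(n+1) * s^(n+1) / (n+1).factorial := by
          rw [hfac]
          have h1 : (n.factorial : ℝ) ≠ 0 := Nat.cast_ne_zero.2 n.factorial_ne_zero
          have h2 : ((n:ℝ)+1) ≠ 0 := by positivity
          field_simp
          ring
        have habs : |∫ r in (0:ℝ)..s, (L * (M * L^n / n.factorial)) * r^n|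
            = (L * (M * L^n / n.factorial)) * (s^(n+1) / (n+1)) := by
          rw [hgval, abs_of_nonneg]
          have hs0 : (0:ℝ) ≤ s := hs.1
          positivity
        calc |∫ r in (0:ℝ)..s, (thetaField (w' r) (ψ n r ω) (η ω)
                - thetaField (w r) (θ r ω) (η ω))|
            ≤ |∫ r in (0:ℝ)..s, (L * (M * L^n / n.factorial)) * r^n| := hni
          _ = M * L^(n+1) * s^(n+1) / (n+1).factorial := by rw [habs, hfin]
    have htend : Filter.Tendsto (fun n : ℕ => M * ((L*t)^n / n.factorial))
        Filter.atTop (nhds 0) := by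
      have h0 := FloorSemiring.tendsto_pow_div_factorial_atTop (K := ℝ) (L*t)
      have := h0.const_mul M
      simpa using this
    have hz : Filter.Tendsto (fun n => ψ n t ω - θ t ω) Filter.atTop (nhds 0) := by
      apply squeeze_zero_norm (fun n => ?_) htend
      have hb := hbound n t ht
      calc ‖ψ n t ω - θ t ω‖ = |ψ n t ω - θ t ω| := rfl
        _ ≤ M * L^n * t^n / n.factorial := hb
        _ = M * ((L*t)^n / n.factorial) := by rw [mul_pow]; ring
    have := hz.add (tendsto_const_nhds (x := θ t ω))
    simpa using this
  exact measurable_of_tendsto_metrizable (fun n => (hmain n).2 t) (tendsto_pi_nhds.2 key)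

section pbarHelpers

variable {pbar : ℝ → ℝ → ℝ → ℝ}

lemma hasDerivAt_pbar_t (hpbar : ContDiff ℝ 1 (fun q : ℝ × ℝ × ℝ => pbar q.1 q.2.1 q.2.2))
    (t a b : ℝ) :
    HasDerivAt (fun s => pbar s a b)
      ((fderiv ℝ (fun q : ℝ × ℝ × ℝ => pbar q.1 q.2.1 q.2.2) (t, a, b)) (1, 0, 0)) t := by
  have hD : HasFDerivAt (fun q : ℝ × ℝ × ℝ => pbar q.1 q.2.1 q.2.2)
      (fderiv ℝ (fun q : ℝ × ℝ × ℝ => pbar q.1 q.2.1 q.2.2) (t, a, b)) (t, a, b) :=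
    (hpbar.differentiable one_ne_zero (t, a, b)).hasFDerivAt
  have hcurve : HasDerivAt (fun s : ℝ => ((s, a, b) : ℝ × ℝ × ℝ)) ((1 : ℝ), (0 : ℝ), (0 : ℝ)) t :=
    (hasDerivAt_id t).prodMk ((hasDerivAt_const t a).prodMk (hasDerivAt_const t b))
  have h := hD.comp_hasDerivAt t hcurve
  exact h

lemma hasDerivAt_pbar_a (hpbar : ContDiff ℝ 1 (fun q : ℝ × ℝ × ℝ => pbar q.1 q.2.1 q.2.2))
    (t a b : ℝ) :
    HasDerivAt (fun a' => pbar t a' b)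
      ((fderiv ℝ (fun q : ℝ × ℝ × ℝ => pbar q.1 q.2.1 q.2.2) (t, a, b)) (0, 1, 0)) a := by
  have hD : HasFDerivAt (fun q : ℝ × ℝ × ℝ => pbar q.1 q.2.1 q.2.2)
      (fderiv ℝ (fun q : ℝ × ℝ × ℝ => pbar q.1 q.2.1 q.2.2) (t, a, b)) (t, a, b) :=
    (hpbar.differentiable one_ne_zero (t, a, b)).hasFDerivAt
  have hcurve : HasDerivAt (fun a' : ℝ => ((t, a', b) : ℝ × ℝ × ℝ)) ((0 : ℝ), (1 : ℝ), (0 : ℝ)) a :=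
    (hasDerivAt_const a t).prodMk ((hasDerivAt_id a).prodMk (hasDerivAt_const a b))
  have h := hD.comp_hasDerivAt a hcurve
  exact h

lemma hasDerivAt_pbar_comp (hpbar : ContDiff ℝ 1 (fun q : ℝ × ℝ × ℝ => pbar q.1 q.2.1 q.2.2))
    {θt : ℝ → ℝ} {v t : ℝ} (hθ : HasDerivAt θt v t) (b : ℝ) :
    HasDerivAt (fun s => pbar s (θt s) b)
      (deriv (fun s => pbar s (θt t) b) t + deriv (fun a' => pbar t a' b) (θt t) * v) t := by
  have hD : HasFDerivAt (fun q : ℝ × ℝ × ℝ => pbar q.1 q.2.1 q.2.2)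
      (fderiv ℝ (fun q : ℝ × ℝ × ℝ => pbar q.1 q.2.1 q.2.2) (t, θt t, b)) (t, θt t, b) :=
    (hpbar.differentiable one_ne_zero (t, θt t, b)).hasFDerivAt
  have hcurve : HasDerivAt (fun s : ℝ => ((s, θt s, b) : ℝ × ℝ × ℝ)) ((1 : ℝ), v, (0 : ℝ)) t :=
    (hasDerivAt_id t).prodMk (hθ.prodMk (hasDerivAt_const t b))
  have h := hD.comp_hasDerivAt t hcurve
  have hv : ((1 : ℝ), v, (0 : ℝ)) = ((1 : ℝ), (0 : ℝ), (0 : ℝ)) + v • ((0 : ℝ), (1 : ℝ), (0 : ℝ)) := by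
    simp [Prod.ext_iff]
  have hlin : (fderiv ℝ (fun q : ℝ × ℝ × ℝ => pbar q.1 q.2.1 q.2.2) (t, θt t, b)) ((1 : ℝ), v, (0 : ℝ))
      = deriv (fun s => pbar s (θt t) b) t + deriv (fun a' => pbar t a' b) (θt t) * v := by
    rw [hv, map_add, ContinuousLinearMap.map_smul, (hasDerivAt_pbar_t hpbar t (θt t) b).deriv,
      (hasDerivAt_pbar_a hpbar t (θt t) b).deriv]
    simp [smul_eq_mul]
    ring
  rw [hlin] at h
  exact h

end pbarHelpers

set_option maxHeartbeats 2000000 in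
theorem control_improvement_descent
    {T α : ℝ} (hT : 0 < T) (hα : 0 < α)
    (θcheck : ℝ → ℝ) (hθcheck : Continuous θcheck) (hθcheckbd : ∃ C, ∀ x, |θcheck x| ≤ C)
    (u ubar : ℝ → ℝ) (hu : ContinuousOn u (Set.Icc 0 T))
    (hubar : ContinuousOn ubar (Set.Icc 0 T))
    {Ω : Type*} [MeasurableSpace Ω] (ℙ : Measure Ω) [IsProbabilityMeasure ℙ]
    (θ θbar : ℝ → Ω → ℝ) (η : Ω → ℝ)
    (hinit : ∀ ω, θ 0 ω = θbar 0 ω)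
    (hmeas : Measurable (fun ω => (θ 0 ω, η ω)))
    (hode : ∀ ω : Ω, ∀ t ∈ Set.Icc (0 : ℝ) T,
      HasDerivAt (fun s => θ s ω) (thetaField (u t) (θ t ω) (η ω)) t)
    (hodebar : ∀ ω : Ω, ∀ t ∈ Set.Icc (0 : ℝ) T,
      HasDerivAt (fun s => θbar s ω) (thetaField (ubar t) (θbar t ω) (η ω)) t)
    (μ μbar : ℝ → Measure (ℝ × ℝ))
    (hμ : ∀ t, μ t = Measure.map (fun ω => (θ t ω, η ω)) ℙ)
    (hμbar : ∀ t, μbar t = Measure.map (fun ω => (θbar t ω, η ω)) ℙ)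
    (pbar : ℝ → ℝ → ℝ → ℝ)
    (hpbar : ContDiff ℝ 1 (fun q : ℝ × ℝ × ℝ => pbar q.1 q.2.1 q.2.2))
    (hpbarbd : ∃ C : ℝ, (∀ t a b : ℝ, |pbar t a b| ≤ C) ∧
      (∀ t a b : ℝ, ‖fderiv ℝ (fun q : ℝ × ℝ × ℝ => pbar q.1 q.2.1 q.2.2) (t, a, b)‖ ≤ C))
    (htrans : ∀ t ∈ Set.Icc (0 : ℝ) T, ∀ a b : ℝ,
      deriv (fun s => pbar s a b) t
        + deriv (fun a' => pbar t a' b) a * thetaField (ubar t) a b = 0)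
    (hterm : ∀ a b : ℝ, pbar T a b = -(1 - Real.cos (a - θcheck b)))
    (hfix : ∀ t ∈ Set.Icc (0 : ℝ) T,
      u t = (1 / α) * ∫ x : ℝ × ℝ, deriv (fun a => pbar t a x.2) x.1 * (1 + Real.cos x.1) ∂(μ t)) :
    ((∫ x : ℝ × ℝ, (1 - Real.cos (x.1 - θcheck x.2)) ∂(μ T))
          + α / 2 * ∫ t in (0 : ℝ)..T, (u t) ^ 2)
        = ((∫ x : ℝ × ℝ, (1 - Real.cos (x.1 - θcheck x.2)) ∂(μbar T))
          + α / 2 * ∫ t in (0 : ℝ)..T, (ubar t) ^ 2)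
          - α / 2 * ∫ t in (0 : ℝ)..T, (u t - ubar t) ^ 2
      ∧ ((∫ x : ℝ × ℝ, (1 - Real.cos (x.1 - θcheck x.2)) ∂(μ T))
          + α / 2 * ∫ t in (0 : ℝ)..T, (u t) ^ 2)
        ≤ ((∫ x : ℝ × ℝ, (1 - Real.cos (x.1 - θcheck x.2)) ∂(μbar T))
          + α / 2 * ∫ t in (0 : ℝ)..T, (ubar t) ^ 2)
      ∧ (¬ (∀ᵐ t ∂(volume.restrict (Set.Icc (0 : ℝ) T)), u t = ubar t) →
        ((∫ x : ℝ × ℝ, (1 - Real.cos (x.1 - θcheck x.2)) ∂(μ T))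
          + α / 2 * ∫ t in (0 : ℝ)..T, (u t) ^ 2)
        < ((∫ x : ℝ × ℝ, (1 - Real.cos (x.1 - θcheck x.2)) ∂(μbar T))
          + α / 2 * ∫ t in (0 : ℝ)..T, (ubar t) ^ 2)) := by
  classical
  obtain ⟨C, hC1, hC2⟩ := hpbarbd
  obtain ⟨Da, hDa_eq⟩ : ∃ Da : ℝ → ℝ → ℝ → ℝ, ∀ t a b, Da t a b
      = (fderiv ℝ (fun q : ℝ × ℝ × ℝ => pbar q.1 q.2.1 q.2.2) (t, a, b)) ((0:ℝ), (1:ℝ), (0:ℝ)) :=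
    ⟨_, fun _ _ _ => rfl⟩
  have hDa_deriv : ∀ t a b, deriv (fun a' => pbar t a' b) a = Da t a b := by
    intro t a b
    rw [hDa_eq]
    exact (hasDerivAt_pbar_a hpbar t a b).deriv
  have hvecnorm : ‖(((0:ℝ), (1:ℝ), (0:ℝ)) : ℝ × ℝ × ℝ)‖ = 1 := by
    simp [Prod.norm_def]
  have hDa_bd : ∀ t a b, |Da t a b| ≤ C := by
    intro t a b
    rw [hDa_eq]
    have h1 := (fderiv ℝ (fun q : ℝ × ℝ × ℝ => pbar q.1 q.2.1 q.2.2) (t, a, b)).le_opNorm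
      (((0:ℝ), (1:ℝ), (0:ℝ)) : ℝ × ℝ × ℝ)
    rw [hvecnorm, mul_one] at h1
    exact h1.trans (hC2 t a b)
  have hDa_cont3 : Continuous (fun q : ℝ × ℝ × ℝ => Da q.1 q.2.1 q.2.2) := by
    have h := (hpbar.continuous_fderiv one_ne_zero).clm_apply
      (continuous_const (y := (((0:ℝ), (1:ℝ), (0:ℝ)) : ℝ × ℝ × ℝ)))
    have heq : (fun q : ℝ × ℝ × ℝ => Da q.1 q.2.1 q.2.2)
        = fun q : ℝ × ℝ × ℝ => (fderiv ℝ (fun q : ℝ × ℝ × ℝ => pbar q.1 q.2.1 q.2.2) q)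
            (((0:ℝ), (1:ℝ), (0:ℝ)) : ℝ × ℝ × ℝ) := funext fun q => hDa_eq q.1 q.2.1 q.2.2
    rw [heq]
    exact h
  -- measurability
  have hηm : Measurable η := hmeas.snd
  have hθ0m : Measurable (θ 0) := hmeas.fst
  have hθm : ∀ t ∈ Set.Icc (0:ℝ) T, Measurable (θ t) :=
    theta_measurable hT hu θ η hθ0m hηm hode
  have hθbar0m : Measurable (θbar 0) := (funext hinit : θ 0 = θbar 0) ▸ hθ0m
  have hθbarm : ∀ t ∈ Set.Icc (0:ℝ) T, Measurable (θbar t) :=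
    theta_measurable hT hubar θbar η hθbar0m hηm hodebar
  have hTmem : T ∈ Set.Icc (0:ℝ) T := Set.right_mem_Icc.2 hT.le
  have h0mem : (0:ℝ) ∈ Set.Icc (0:ℝ) T := Set.left_mem_Icc.2 hT.le
  have hmapT : Measurable (fun ω => (θ T ω, η ω)) := (hθm T hTmem).prodMk hηm
  have hmapbarT : Measurable (fun ω => (θbar T ω, η ω)) := (hθbarm T hTmem).prodMk hηm
  -- trajectory continuity
  have hθcont : ∀ ω, ContinuousOn (fun s => θ s ω) (Set.Icc (0:ℝ) T) := fun ω s hs =>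
    (hode ω s hs).continuousAt.continuousWithinAt
  have hθbarcont : ∀ ω, ContinuousOn (fun s => θbar s ω) (Set.Icc (0:ℝ) T) := fun ω s hs =>
    (hodebar ω s hs).continuousAt.continuousWithinAt
  -- derivative of pbar along the u-trajectories
  have hg : ∀ ω, ∀ t ∈ Set.Icc (0:ℝ) T,
      HasDerivAt (fun s => pbar s (θ s ω) (η ω))
        (Da t (θ t ω) (η ω) * ((1 + Real.cos (θ t ω)) * (u t - ubar t))) t := by
    intro ω t ht
    have h1 := hasDerivAt_pbar_comp hpbar (hode ω t ht) (η ω)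
    have h2 := htrans t ht (θ t ω) (η ω)
    have h3 := thetaField_sub_ctrl (u t) (ubar t) (θ t ω) (η ω)
    rw [hDa_deriv] at h1 h2
    have heq : deriv (fun s => pbar s (θ t ω) (η ω)) t
        + Da t (θ t ω) (η ω) * thetaField (u t) (θ t ω) (η ω)
        = Da t (θ t ω) (η ω) * ((1 + Real.cos (θ t ω)) * (u t - ubar t)) := by
      linear_combination h2 + Da t (θ t ω) (η ω) * h3
    rw [heq] at h1
    exact h1
  -- pbar is constant along the ubar-trajectories
  have hgbar : ∀ ω, ∀ t ∈ Set.Icc (0:ℝ) T,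
      HasDerivAt (fun s => pbar s (θbar s ω) (η ω)) 0 t := by
    intro ω t ht
    have h1 := hasDerivAt_pbar_comp hpbar (hodebar ω t ht) (η ω)
    rw [htrans t ht (θbar t ω) (η ω)] at h1
    exact h1
  have hbarconst : ∀ ω, pbar T (θbar T ω) (η ω) = pbar 0 (θ 0 ω) (η ω) := by
    intro ω
    have h := intervalIntegral.integral_eq_sub_of_hasDerivAt
      (f := fun s => pbar s (θbar s ω) (η ω)) (f' := fun _ => (0:ℝ))
      (fun t ht' => hgbar ω t (by rwa [Set.uIcc_of_le hT.le] at ht'))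
      intervalIntegrable_const
    simp only [intervalIntegral.integral_zero] at h
    rw [hinit ω]
    linarith
  -- continuity of the increment integrand in time
  have hAcont : ∀ ω, ContinuousOn
      (fun t => Da t (θ t ω) (η ω) * ((1 + Real.cos (θ t ω)) * (u t - ubar t)))
      (Set.Icc (0:ℝ) T) := by
    intro ω
    have hcurve : ContinuousOn (fun t : ℝ => ((t, θ t ω, η ω) : ℝ × ℝ × ℝ)) (Set.Icc (0:ℝ) T) :=
      continuousOn_id.prodMk ((hθcont ω).prodMk continuousOn_const)
    have hc1 : ContinuousOn (fun t => Da t (θ t ω) (η ω)) (Set.Icc (0:ℝ) T) := by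
      have h := hDa_cont3.comp_continuousOn hcurve
      exact h
    exact hc1.mul ((continuousOn_const.add
      (Real.continuous_cos.comp_continuousOn (hθcont ω))).mul (hu.sub hubar))
  have huIcc : Set.uIcc (0:ℝ) T = Set.Icc (0:ℝ) T := Set.uIcc_of_le hT.le
  -- FTC along u-trajectories
  have hFTC : ∀ ω, pbar T (θ T ω) (η ω) - pbar 0 (θ 0 ω) (η ω)
      = ∫ t in (0:ℝ)..T, Da t (θ t ω) (η ω) * ((1 + Real.cos (θ t ω)) * (u t - ubar t)) := by
    intro ω
    exact (intervalIntegral.integral_eq_sub_of_hasDerivAt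
      (fun t ht' => hg ω t (by rwa [huIcc] at ht'))
      (((hAcont ω).mono huIcc.subset).intervalIntegrable)).symm
  -- bounds on u, ubar
  obtain ⟨Cu, hCu⟩ := isCompact_Icc.exists_bound_of_continuousOn hu
  obtain ⟨Cub, hCub⟩ := isCompact_Icc.exists_bound_of_continuousOn hubar
  have hC0 : (0:ℝ) ≤ C := le_trans (abs_nonneg _) (hC1 0 0 0)
  -- integrability of the endpoint terms
  have hPcont : Continuous (fun q : ℝ × ℝ × ℝ => pbar q.1 q.2.1 q.2.2) := hpbar.continuous
  have hint_end : ∀ (τ : ℝ) (X : Ω → ℝ), Measurable X →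
      Integrable (fun ω => pbar τ (X ω) (η ω)) ℙ := by
    intro τ X hX
    have hcont2 : Continuous (fun p : ℝ × ℝ => pbar τ p.1 p.2) := by
      have h := hPcont.comp
        ((continuous_const (y := τ)).prodMk (continuous_fst.prodMk continuous_snd))
      exact h
    have hm : Measurable fun ω => pbar τ (X ω) (η ω) :=
      hcont2.measurable.comp (hX.prodMk hηm)
    exact (integrable_const C).mono' hm.aestronglyMeasurable
      (Filter.Eventually.of_forall fun ω => by
        simpa [Real.norm_eq_abs] using hC1 τ (X ω) (η ω))
  have hIT : Integrable (fun ω => pbar T (θ T ω) (η ω)) ℙ := hint_end T (θ T) (hθm T hTmem)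
  have hI0 : Integrable (fun ω => pbar 0 (θ 0 ω) (η ω)) ℙ := hint_end 0 (θ 0) hθ0m
  -- finite restricted measure
  haveI hfinν : IsFiniteMeasure (volume.restrict (Set.Ioc (0:ℝ) T)) := by
    constructor
    rw [Measure.restrict_apply_univ, Real.volume_Ioc]
    exact ENNReal.ofReal_lt_top
  -- clamp
  set c : ℝ → ℝ := fun s => max 0 (min s T) with hcdef
  have hc_cont : Continuous c := continuous_const.max (continuous_id.min continuous_const)
  have hc_mem : ∀ s, c s ∈ Set.Icc (0:ℝ) T := fun s =>
    ⟨le_max_left _ _, max_le hT.le (min_le_right _ _)⟩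
  have hc_eq : ∀ s ∈ Set.Icc (0:ℝ) T, c s = s := by
    intro s hs
    simp only [hcdef]
    rw [min_eq_left hs.2, max_eq_right hs.1]
  -- joint strong measurability of the clamped trajectory
  have hθcjoint : StronglyMeasurable (fun p : Ω × ℝ => θ (c p.2) p.1) := by
    have h := stronglyMeasurable_uncurry_of_continuous_of_stronglyMeasurable
      (u := fun t ω => θ (c t) ω)
      (fun ω => (hθcont ω).comp_continuous hc_cont hc_mem)
      (fun t => (hθm (c t) (hc_mem t)).stronglyMeasurable)
    exact h.comp_measurable measurable_swap
  -- a.e. membership of the time coordinate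
  have hae_mem : ∀ᵐ p ∂(ℙ.prod (volume.restrict (Set.Ioc (0:ℝ) T))), p.2 ∈ Set.Ioc (0:ℝ) T := by
    rw [ae_iff]
    have hset : {p : Ω × ℝ | ¬ p.2 ∈ Set.Ioc (0:ℝ) T}
        = (Set.univ : Set Ω) ×ˢ (Set.Ioc (0:ℝ) T)ᶜ := by
      ext p; simp
    rw [hset, Measure.prod_prod, Measure.restrict_apply measurableSet_Ioc.compl]
    simp
  -- strong measurability of the product integrand
  have hAsm : AEStronglyMeasurable
      (Function.uncurry fun ω t => Da t (θ t ω) (η ω) * ((1 + Real.cos (θ t ω)) * (u t - ubar t)))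
      (ℙ.prod (volume.restrict (Set.Ioc (0:ℝ) T))) := by
    have hG : StronglyMeasurable (fun p : Ω × ℝ => ((p.2, θ (c p.2) p.1, η p.1) : ℝ × ℝ × ℝ)) :=
      measurable_snd.stronglyMeasurable.prodMk
        (hθcjoint.prodMk ((hηm.comp measurable_fst).stronglyMeasurable))
    have hK : Continuous (fun q : ℝ × ℝ × ℝ =>
        Da q.1 q.2.1 q.2.2 * ((1 + Real.cos q.2.1) * (u (c q.1) - ubar (c q.1)))) := by
      apply hDa_cont3.mul
      apply Continuous.mul
      · exact continuous_const.add (Real.continuous_cos.comp (continuous_fst.comp continuous_snd))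
      · exact ((hu.comp_continuous hc_cont hc_mem).comp continuous_fst).sub
          ((hubar.comp_continuous hc_cont hc_mem).comp continuous_fst)
    have hsm := hK.comp_stronglyMeasurable hG
    refine hsm.aestronglyMeasurable.congr ?_
    refine hae_mem.mono fun p hp => ?_
    have hIcc : p.2 ∈ Set.Icc (0:ℝ) T := ⟨hp.1.le, hp.2⟩
    simp only [Function.uncurry]
    rw [hc_eq p.2 hIcc]
  -- integrability on the product
  have hAint : Integrable
      (Function.uncurry fun ω t => Da t (θ t ω) (η ω) * ((1 + Real.cos (θ t ω)) * (u t - ubar t)))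
      (ℙ.prod (volume.restrict (Set.Ioc (0:ℝ) T))) := by
    refine (integrable_const (C * (2 * (Cu + Cub)))).mono' hAsm ?_
    refine hae_mem.mono fun p hp => ?_
    have hIcc : p.2 ∈ Set.Icc (0:ℝ) T := ⟨hp.1.le, hp.2⟩
    have h1 := hDa_bd p.2 (θ p.2 p.1) (η p.1)
    have h2 := hCu p.2 hIcc
    have h3 := hCub p.2 hIcc
    have h4 : |1 + Real.cos (θ p.2 p.1)| ≤ 2 := by
      have ha := Real.cos_le_one (θ p.2 p.1)
      have hb := Real.neg_one_le_cos (θ p.2 p.1)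
      rw [abs_le]; constructor <;> linarith
    have h5 : |u p.2 - ubar p.2| ≤ Cu + Cub := by
      calc |u p.2 - ubar p.2| ≤ |u p.2| + |ubar p.2| := abs_sub _ _
        _ ≤ Cu + Cub := add_le_add h2 h3
    have h6 : |(1 + Real.cos (θ p.2 p.1)) * (u p.2 - ubar p.2)| ≤ 2 * (Cu + Cub) := by
      rw [abs_mul]
      exact mul_le_mul h4 h5 (abs_nonneg _) (by norm_num)
    calc ‖Function.uncurry (fun ω t => Da t (θ t ω) (η ω)
            * ((1 + Real.cos (θ t ω)) * (u t - ubar t))) p‖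
        = |Da p.2 (θ p.2 p.1) (η p.1) * ((1 + Real.cos (θ p.2 p.1)) * (u p.2 - ubar p.2))| := rfl
      _ = |Da p.2 (θ p.2 p.1) (η p.1)| * |(1 + Real.cos (θ p.2 p.1)) * (u p.2 - ubar p.2)| :=
          abs_mul _ _
      _ ≤ C * (2 * (Cu + Cub)) := mul_le_mul h1 h6 (abs_nonneg _) hC0
  -- Fubini
  have hswap : ∫ ω, (∫ t in (0:ℝ)..T,
        Da t (θ t ω) (η ω) * ((1 + Real.cos (θ t ω)) * (u t - ubar t))) ∂ℙ
      = ∫ t in Set.Ioc (0:ℝ) T, (∫ ω,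
        Da t (θ t ω) (η ω) * ((1 + Real.cos (θ t ω)) * (u t - ubar t)) ∂ℙ) := by
    simp_rw [intervalIntegral.integral_of_le hT.le]
    exact MeasureTheory.integral_integral_swap hAint
  -- the inner integral via the fixed point relation
  have hinner : ∀ t ∈ Set.Icc (0:ℝ) T,
      ∫ ω, Da t (θ t ω) (η ω) * ((1 + Real.cos (θ t ω)) * (u t - ubar t)) ∂ℙ
        = α * u t * (u t - ubar t) := by
    intro t ht
    have hmapt : Measurable (fun ω => (θ t ω, η ω)) := (hθm t ht).prodMk hηm
    have hcontDa2 : Continuous (fun x : ℝ × ℝ => Da t x.1 x.2) := by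
      have h := hDa_cont3.comp
        ((continuous_const (y := t)).prodMk (continuous_fst.prodMk continuous_snd))
      exact h
    have hcont2 : Continuous (fun x : ℝ × ℝ => Da t x.1 x.2 * (1 + Real.cos x.1)) :=
      hcontDa2.mul (continuous_const.add (Real.continuous_cos.comp continuous_fst))
    have hmi : ∫ x : ℝ × ℝ, Da t x.1 x.2 * (1 + Real.cos x.1) ∂(μ t)
        = ∫ ω, Da t (θ t ω) (η ω) * (1 + Real.cos (θ t ω)) ∂ℙ := by
      rw [hμ t]
      exact integral_map hmapt.aemeasurable hcont2.aestronglyMeasurable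
    have hfix' := hfix t ht
    simp_rw [hDa_deriv] at hfix'
    rw [hmi] at hfix'
    have hα' : α ≠ 0 := ne_of_gt hα
    have hval : ∫ ω, Da t (θ t ω) (η ω) * (1 + Real.cos (θ t ω)) ∂ℙ = α * u t := by
      field_simp at hfix'
      linarith
    calc ∫ ω, Da t (θ t ω) (η ω) * ((1 + Real.cos (θ t ω)) * (u t - ubar t)) ∂ℙ
        = ∫ ω, (Da t (θ t ω) (η ω) * (1 + Real.cos (θ t ω))) * (u t - ubar t) ∂ℙ := by
          simp_rw [mul_assoc]
      _ = (∫ ω, Da t (θ t ω) (η ω) * (1 + Real.cos (θ t ω)) ∂ℙ) * (u t - ubar t) :=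
          integral_mul_const _ _
      _ = α * u t * (u t - ubar t) := by rw [hval]
  -- endpoint integral identities
  have hend1 : ∫ ω, pbar T (θ T ω) (η ω) ∂ℙ
      = - ∫ x : ℝ × ℝ, (1 - Real.cos (x.1 - θcheck x.2)) ∂(μ T) := by
    have h1 : ∫ x : ℝ × ℝ, (1 - Real.cos (x.1 - θcheck x.2)) ∂(μ T)
        = ∫ ω, (1 - Real.cos (θ T ω - θcheck (η ω))) ∂ℙ := by
      rw [hμ T]
      exact integral_map hmapT.aemeasurable (Continuous.aestronglyMeasurable (by fun_prop))
    rw [h1]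
    rw [← MeasureTheory.integral_neg]
    congr 1
    funext ω
    rw [hterm]
  have hend1bar : ∫ ω, pbar T (θbar T ω) (η ω) ∂ℙ
      = - ∫ x : ℝ × ℝ, (1 - Real.cos (x.1 - θcheck x.2)) ∂(μbar T) := by
    have h1 : ∫ x : ℝ × ℝ, (1 - Real.cos (x.1 - θcheck x.2)) ∂(μbar T)
        = ∫ ω, (1 - Real.cos (θbar T ω - θcheck (η ω))) ∂ℙ := by
      rw [hμbar T]
      exact integral_map hmapbarT.aemeasurable (Continuous.aestronglyMeasurable (by fun_prop))
    rw [h1]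
    rw [← MeasureTheory.integral_neg]
    congr 1
    funext ω
    rw [hterm]
  have hend0 : ∫ ω, pbar 0 (θ 0 ω) (η ω) ∂ℙ
      = - ∫ x : ℝ × ℝ, (1 - Real.cos (x.1 - θcheck x.2)) ∂(μbar T) := by
    rw [← hend1bar]
    apply MeasureTheory.integral_congr_ae
    exact Filter.Eventually.of_forall fun ω => (hbarconst ω).symm
  -- the key increment identity
  have hkey : (- ∫ x : ℝ × ℝ, (1 - Real.cos (x.1 - θcheck x.2)) ∂(μ T))
      - (- ∫ x : ℝ × ℝ, (1 - Real.cos (x.1 - θcheck x.2)) ∂(μbar T))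
      = ∫ t in (0:ℝ)..T, α * u t * (u t - ubar t) := by
    rw [← hend1, ← hend0, ← integral_sub hIT hI0]
    rw [MeasureTheory.integral_congr_ae (Filter.Eventually.of_forall hFTC)]
    rw [hswap]
    rw [intervalIntegral.integral_of_le hT.le]
    apply MeasureTheory.integral_congr_ae
    refine (ae_restrict_mem measurableSet_Ioc).mono fun t ht => ?_
    exact hinner t ⟨ht.1.le, ht.2⟩
  -- interval integrabilities for the algebra
  have huI : ContinuousOn u (Set.uIcc 0 T) := by rw [huIcc]; exact hu
  have hubarI : ContinuousOn ubar (Set.uIcc 0 T) := by rw [huIcc]; exact hubar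
  have hu2 : IntervalIntegrable (fun t => u t ^ 2) volume 0 T :=
    ((huI.pow 2).intervalIntegrable)
  have hub2 : IntervalIntegrable (fun t => ubar t ^ 2) volume 0 T :=
    ((hubarI.pow 2).intervalIntegrable)
  have huub : IntervalIntegrable (fun t => u t * ubar t) volume 0 T :=
    ((huI.mul hubarI).intervalIntegrable)
  have hsub2 : IntervalIntegrable (fun t => (u t - ubar t) ^ 2) volume 0 T :=
    (((huI.sub hubarI).pow 2).intervalIntegrable)
  have hval1 : ∫ t in (0:ℝ)..T, α * u t * (u t - ubar t)
      = α * ((∫ t in (0:ℝ)..T, u t ^ 2) - ∫ t in (0:ℝ)..T, u t * ubar t) := by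
    have h1 : ∫ t in (0:ℝ)..T, α * u t * (u t - ubar t)
        = ∫ t in (0:ℝ)..T, α * (u t ^ 2 - u t * ubar t) :=
      intervalIntegral.integral_congr fun t _ => by ring
    rw [h1, intervalIntegral.integral_const_mul,
      intervalIntegral.integral_sub hu2 huub]
  have hval2 : ∫ t in (0:ℝ)..T, (u t - ubar t) ^ 2
      = (∫ t in (0:ℝ)..T, u t ^ 2) - 2 * (∫ t in (0:ℝ)..T, u t * ubar t)
        + ∫ t in (0:ℝ)..T, ubar t ^ 2 := by
    have h1 : ∫ t in (0:ℝ)..T, (u t - ubar t) ^ 2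
        = ∫ t in (0:ℝ)..T, (u t ^ 2 - 2 * (u t * ubar t) + ubar t ^ 2) :=
      intervalIntegral.integral_congr fun t _ => by ring
    rw [h1, intervalIntegral.integral_add (hu2.sub (huub.const_mul 2)) hub2,
      intervalIntegral.integral_sub hu2 (huub.const_mul 2),
      intervalIntegral.integral_const_mul]
  -- conclude
  have goal1 : ((∫ x : ℝ × ℝ, (1 - Real.cos (x.1 - θcheck x.2)) ∂(μ T))
        + α / 2 * ∫ t in (0 : ℝ)..T, (u t) ^ 2)
      = ((∫ x : ℝ × ℝ, (1 - Real.cos (x.1 - θcheck x.2)) ∂(μbar T))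
        + α / 2 * ∫ t in (0 : ℝ)..T, (ubar t) ^ 2)
        - α / 2 * ∫ t in (0 : ℝ)..T, (u t - ubar t) ^ 2 := by
    rw [hval1] at hkey
    linear_combination (-1 : ℝ) * hkey + (α/2) * hval2
  have hS3nn : (0:ℝ) ≤ ∫ t in (0:ℝ)..T, (u t - ubar t) ^ 2 :=
    intervalIntegral.integral_nonneg hT.le fun t _ => sq_nonneg _
  have hhalf : (0:ℝ) < α / 2 := by linarith
  refine ⟨goal1, ?_, ?_⟩
  · nlinarith [mul_nonneg hhalf.le hS3nn]
  · intro hne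
    have hS3pos : (0:ℝ) < ∫ t in (0:ℝ)..T, (u t - ubar t) ^ 2 := by
      rcases hS3nn.lt_or_eq with h | h
      · exact h
    -- if the integral vanishes, u = ubar a.e. on [0, T]
      exfalso
      have hz := (intervalIntegral.integral_eq_zero_iff_of_nonneg_ae
        (Filter.Eventually.of_forall fun t => sq_nonneg _) hsub2).1 h.symm
      have hIocT0 : Set.Ioc T (0:ℝ) = ∅ := Set.Ioc_eq_empty (by linarith)
      rw [hIocT0, Set.union_empty] at hz
      have haeIoc : ∀ᵐ t ∂(volume.restrict (Set.Ioc (0:ℝ) T)), u t = ubar t := by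
        refine hz.mono fun t ht => ?_
        have : (u t - ubar t) ^ 2 = 0 := ht
        have h2 : u t - ubar t = 0 := by
          nlinarith [this, sq_abs (u t - ubar t), abs_nonneg (u t - ubar t)]
        linarith
      have hres : volume.restrict (Set.Ioc (0:ℝ) T) = volume.restrict (Set.Icc (0:ℝ) T) :=
        Measure.restrict_congr_set MeasureTheory.Ioc_ae_eq_Icc
      rw [hres] at haeIoc
      exact hne haeIoc
    nlinarith [mul_pos hhalf hS3pos]
end
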